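/- arXiv:1106.4225 — 8 statements merged into one kernel-verified Lean document; each statement's English description precedes it below -/
import Mathlib

section
/- Let ω ∈ ℝ \ {0} and let W : ℝ → ℝ be continuous with ∫_ℝ |W(s)| ds < ∞. Then there exists a twice continuously differentiable function η : ℝ → ℂ solving η''(s) + ω²η(s) = W(s)η(s) for all s ∈ ℝ and satisfying the Jost boundary conditions at −∞: lim_{s→−∞} e^{iωs}η(s) = 1 and lim_{s→−∞} (e^{iωs}η(s))' = 0. -/
/-!
Write `η(s) = e^{-iωs} φ(s)`. The equation for `η` becomes `φ'' = 2iωφ' + Wφ`, and the Jost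
conditions say `φ → 1`, `φ' → 0` at `-∞`; by variation of constants this is the Volterra equation
`φ(s) = 1 + ∫_{-∞}^s (e^{2iω(s-t)} - 1) / (2iω) W(t) φ(t) dt`. Its kernel is bounded by
`|W(t)| / |ω| = μ'(t)`, where `μ(s) = ∫_{-∞}^s |W| / |ω|` is bounded since `W` is integrable, and
`∫_{-∞}^s e^{2μ} μ' = (e^{2μ(s)} - 1) / 2`. So the Volterra operator is a `1/2`-contraction for the
weighted sup norm `sup e^{-2μ} |φ|`, and Banach's fixed point theorem gives `φ`.
-/

open Set Filter MeasureTheory Topology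
open Complex
open scoped Real BoundedContinuousFunction

section IntegralIic

variable {E : Type*} [NormedAddCommGroup E] [NormedSpace ℝ E] [CompleteSpace E] {f : ℝ → E}

theorem hasDerivAt_integral_Iic (hfi : Integrable f) (hfc : Continuous f) (s : ℝ) :
    HasDerivAt (fun x => ∫ t in Iic x, f t) (f s) s := by
  refine ((intervalIntegral.integral_hasDerivAt_right (a := 0) hfi.intervalIntegrable
    hfc.stronglyMeasurable.stronglyMeasurableAtFilter hfc.continuousAt).const_add
      (∫ t in Iic 0, f t)).congr_of_eventuallyEq (Eventually.of_forall fun x => ?_)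
  dsimp only
  rw [← intervalIntegral.integral_Iic_sub_Iic hfi.integrableOn hfi.integrableOn]
  abel

theorem continuous_integral_Iic (hfi : Integrable f) (hfc : Continuous f) :
    Continuous fun x => ∫ t in Iic x, f t :=
  continuous_iff_continuousAt.2 fun s => (hasDerivAt_integral_Iic hfi hfc s).continuousAt

end IntegralIic

section Bielecki

variable {g : ℝ → ℝ}

theorem integrable_exp_two_mul_integral_Iic_mul (hg0 : ∀ t, 0 ≤ g t) (hgc : Continuous g)
    (hgi : Integrable g) : Integrable fun t => rexp (2 * ∫ τ in Iic t, g τ) * g t := by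
  have hc : Continuous fun t => rexp (2 * ∫ τ in Iic t, g τ) :=
    Real.continuous_exp.comp (continuous_const.mul (continuous_integral_Iic hgi hgc))
  refine hgi.bdd_mul (c := rexp (2 * ∫ t, g t)) hc.aestronglyMeasurable (ae_of_all _ fun t => ?_)
  rw [Real.norm_of_nonneg (Real.exp_pos _).le, Real.exp_le_exp]
  exact mul_le_mul_of_nonneg_left (setIntegral_le_integral hgi (ae_of_all _ hg0)) two_pos.le

theorem integral_Iic_exp_two_mul_integral_Iic_mul (hg0 : ∀ t, 0 ≤ g t) (hgc : Continuous g)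
    (hgi : Integrable g) (s : ℝ) :
    ∫ t in Iic s, rexp (2 * ∫ τ in Iic t, g τ) * g t = (rexp (2 * ∫ τ in Iic s, g τ) - 1) / 2 := by
  have hderiv : ∀ t, HasDerivAt (fun x => rexp (2 * ∫ τ in Iic x, g τ) / 2)
      (rexp (2 * ∫ τ in Iic t, g τ) * g t) t := fun t => by
    refine (((hasDerivAt_integral_Iic hgi hgc t).const_mul 2).exp.div_const 2).congr_deriv ?_
    ring
  have hμ : Tendsto (fun x => 2 * ∫ τ in Iic x, g τ) atBot (𝓝 0) := by
    simpa using (tendsto_integral_Iic_zero (μ := volume) (f := g) tendsto_id).const_mul (2 : ℝ)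
  have hlim : Tendsto (fun x => rexp (2 * ∫ τ in Iic x, g τ) / 2) atBot (𝓝 (1 / 2)) := by
    simpa using ((Real.continuous_exp.tendsto 0).comp hμ).div_const 2
  rw [integral_Iic_of_hasDerivAt_of_tendsto' (fun t _ => hderiv t)
    (integrable_exp_two_mul_integral_Iic_mul hg0 hgc hgi).integrableOn hlim]
  ring

theorem exp_neg_two_mul_integral_Iic_mul_integral_Iic_le (hg0 : ∀ t, 0 ≤ g t)
    (hgc : Continuous g) (hgi : Integrable g) {x : ℝ → ℝ} {d : ℝ} (hx0 : ∀ t, 0 ≤ x t)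
    (hx : ∀ t, x t ≤ rexp (2 * ∫ τ in Iic t, g τ) * d) (s : ℝ) :
    rexp (-(2 * ∫ τ in Iic s, g τ)) * ∫ t in Iic s, g t * x t ≤ d / 2 := by
  set μ : ℝ → ℝ := fun s => ∫ t in Iic s, g t
  have hd : 0 ≤ d := nonneg_of_mul_nonneg_right ((hx0 0).trans (hx 0)) (Real.exp_pos _)
  have hinv : rexp (-(2 * μ s)) * rexp (2 * μ s) = 1 := by
    rw [← Real.exp_add, neg_add_cancel, Real.exp_zero]
  calc rexp (-(2 * μ s)) * ∫ t in Iic s, g t * x t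
      ≤ rexp (-(2 * μ s)) * ∫ t in Iic s, rexp (2 * μ t) * g t * d := by
        refine mul_le_mul_of_nonneg_left (integral_mono_of_nonneg
          (ae_of_all _ fun t => mul_nonneg (hg0 t) (hx0 t))
          ((integrable_exp_two_mul_integral_Iic_mul hg0 hgc hgi).integrableOn.mul_const _)
          (ae_of_all _ fun t => ?_)) (Real.exp_pos _).le
        exact (mul_le_mul_of_nonneg_left (hx t) (hg0 t)).trans_eq (by ring)
    _ = (1 - rexp (-(2 * μ s))) / 2 * d := by
        rw [integral_mul_const, integral_Iic_exp_two_mul_integral_Iic_mul hg0 hgc hgi]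
        linear_combination d / 2 * hinv
    _ ≤ d / 2 := by nlinarith [Real.exp_pos (-(2 * μ s))]

theorem BoundedContinuousFunction.exists_fixedPoint_of_volterra_lipschitz
    {E : Type*} [NormedAddCommGroup E] [NormedSpace ℝ E] [CompleteSpace E]
    (hg0 : ∀ t, 0 ≤ g t) (hgc : Continuous g) (hgi : Integrable g)
    (F : (ℝ → E) → ℝ → E) (hF : ∀ u : ℝ →ᵇ E, ∃ v : ℝ →ᵇ E, ⇑v = F u)
    (hlip : ∀ (u v : ℝ →ᵇ E) (s : ℝ), ‖F u s - F v s‖ ≤ ∫ t in Iic s, g t * ‖u t - v t‖) :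
    ∃ φ : ℝ →ᵇ E, F φ = φ := by
  choose G hG using hF
  set μ : ℝ → ℝ := fun s => ∫ t in Iic s, g t
  have hμc : Continuous μ := continuous_integral_Iic hgi hgc
  have hμ0 : ∀ s, 0 ≤ μ s := fun s => setIntegral_nonneg measurableSet_Iic fun t _ => hg0 t
  have hμM : ∀ s, μ s ≤ ∫ t, g t := fun s => setIntegral_le_integral hgi (ae_of_all _ hg0)
  -- Conjugated by Bielecki's weight `w = e^{2μ}`, `F` becomes a `1/2`-contraction.
  let w : ℝ →ᵇ ℝ := .ofNormedAddCommGroup (fun s => rexp (2 * μ s)) (by fun_prop)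
    (rexp (2 * ∫ t, g t)) fun s => by
      rw [Real.norm_of_nonneg (Real.exp_pos _).le, Real.exp_le_exp]; linarith [hμM s]
  let w' : ℝ →ᵇ ℝ := .ofNormedAddCommGroup (fun s => rexp (-(2 * μ s))) (by fun_prop) 1
    fun s => by
      rw [Real.norm_of_nonneg (Real.exp_pos _).le, Real.exp_le_one_iff]; linarith [hμ0 s]
  let S : (ℝ →ᵇ E) → ℝ →ᵇ E := fun ψ => w' • G (w • ψ)
  have hS : ContractingWith (1 / 2) S := by
    refine ⟨by rw [← NNReal.coe_lt_coe]; norm_num, LipschitzWith.of_dist_le_mul fun ψ₁ ψ₂ => ?_⟩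
    refine (BoundedContinuousFunction.dist_le (by positivity)).2 fun s => ?_
    have hw : ∀ t, ‖(w • ψ₁) t - (w • ψ₂) t‖ ≤ rexp (2 * μ t) * dist ψ₁ ψ₂ := fun t => by
      change ‖rexp (2 * μ t) • ψ₁ t - rexp (2 * μ t) • ψ₂ t‖ ≤ _
      rw [← smul_sub, norm_smul, Real.norm_of_nonneg (Real.exp_pos _).le, ← dist_eq_norm]
      exact mul_le_mul_of_nonneg_left (dist_coe_le_dist t) (Real.exp_pos _).le
    calc dist (S ψ₁ s) (S ψ₂ s) = rexp (-(2 * μ s)) * ‖F ⇑(w • ψ₁) s - F ⇑(w • ψ₂) s‖ := by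
          change dist (rexp (-(2 * μ s)) • G (w • ψ₁) s) (rexp (-(2 * μ s)) • G (w • ψ₂) s) = _
          rw [dist_eq_norm, ← smul_sub, norm_smul, Real.norm_of_nonneg (Real.exp_pos _).le,
            hG, hG]
      _ ≤ rexp (-(2 * μ s)) * ∫ t in Iic s, g t * ‖(w • ψ₁) t - (w • ψ₂) t‖ := by
          gcongr
          exact hlip _ _ s
      _ ≤ ↑(1 / 2 : NNReal) * dist ψ₁ ψ₂ := by
          refine (exp_neg_two_mul_integral_Iic_mul_integral_Iic_le hg0 hgc hgi
            (fun t => norm_nonneg _) hw s).trans_eq ?_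
          push_cast
          ring
  set ψ := ContractingWith.fixedPoint S hS
  have hψ : S ψ = ψ := hS.fixedPoint_isFixedPt
  refine ⟨w • ψ, funext fun s => ?_⟩
  have h : rexp (-(2 * μ s)) • G (w • ψ) s = ψ s := DFunLike.congr_fun hψ s
  change _ = rexp (2 * μ s) • ψ s
  rw [← h, smul_smul, ← Real.exp_add, add_neg_cancel, Real.exp_zero, one_smul, hG]

end Bielecki

theorem hasDerivAt_cexp_mul_ofReal (c : ℂ) (s : ℝ) :
    HasDerivAt (fun x : ℝ => cexp (c * x)) (c * cexp (c * s)) s := by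
  simpa [mul_comm] using ((hasDerivAt_id s).ofReal_comp.const_mul c).cexp

section JostIntegral

/- `jostIntegral ω f s = ∫_{-∞}^s (e^{2iω(s-t)} - 1) / (2iω) f(t) dt`, the solution of
`φ'' = 2iωφ' + f` vanishing at `-∞`; `jostIntegralDeriv ω f` is its derivative. -/
noncomputable def jostIntegralDeriv (ω : ℝ) (f : ℝ → ℂ) (s : ℝ) : ℂ :=
  cexp (2 * I * ω * s) * ∫ t in Iic s, cexp (-(2 * I * ω * t)) * f t

noncomputable def jostIntegral (ω : ℝ) (f : ℝ → ℂ) (s : ℝ) : ℂ :=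
  (2 * I * ω)⁻¹ * (jostIntegralDeriv ω f s - ∫ t in Iic s, f t)

variable {ω : ℝ} {f : ℝ → ℂ}

theorem tendsto_jostIntegralDeriv_atBot : Tendsto (jostIntegralDeriv ω f) atBot (𝓝 0) := by
  rw [tendsto_zero_iff_norm_tendsto_zero]
  simpa [jostIntegralDeriv, Complex.norm_exp] using
    (tendsto_integral_Iic_zero (μ := volume)
      (f := fun t => cexp (-(2 * I * ω * t)) * f t) tendsto_id).norm

theorem tendsto_jostIntegral_atBot : Tendsto (jostIntegral ω f) atBot (𝓝 0) := by
  have h := ((tendsto_jostIntegralDeriv_atBot (ω := ω) (f := f)).sub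
    (tendsto_integral_Iic_zero (μ := volume) (f := f) tendsto_id)).const_mul (2 * I * ω)⁻¹
  rwa [sub_zero, mul_zero] at h

theorem norm_jostIntegral_le (s : ℝ) :
    ‖jostIntegral ω f s‖ ≤ |ω|⁻¹ * ∫ t in Iic s, ‖f t‖ := by
  have hD : ‖jostIntegralDeriv ω f s‖ ≤ ∫ t in Iic s, ‖f t‖ := by
    simpa [jostIntegralDeriv, Complex.norm_exp] using
      norm_integral_le_integral_norm (μ := volume.restrict (Iic s))
        (fun t => cexp (-(2 * I * ω * t)) * f t)
  calc ‖jostIntegral ω f s‖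
      ≤ (2 * |ω|)⁻¹ * (‖jostIntegralDeriv ω f s‖ + ‖∫ t in Iic s, f t‖) := by
        rw [jostIntegral, norm_mul]
        gcongr
        · simp
        · exact norm_sub_le _ _
    _ ≤ (2 * |ω|)⁻¹ * ((∫ t in Iic s, ‖f t‖) + ∫ t in Iic s, ‖f t‖) := by
        gcongr
        exact norm_integral_le_integral_norm (μ := volume.restrict (Iic s)) f
    _ = |ω|⁻¹ * ∫ t in Iic s, ‖f t‖ := by
        ring

variable (ω) in
theorem integrable_jostIntegrand (hfi : Integrable f) :
    Integrable fun t : ℝ => cexp (-(2 * I * ω * t)) * f t :=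
  hfi.bdd_mul (c := 1)
    (by fun_prop : Continuous fun t : ℝ => cexp (-(2 * I * ω * t))).aestronglyMeasurable
    (ae_of_all _ fun t => by simp [Complex.norm_exp])

theorem hasDerivAt_jostIntegralDeriv (hfi : Integrable f) (hfc : Continuous f) (s : ℝ) :
    HasDerivAt (jostIntegralDeriv ω f) (2 * I * ω * jostIntegralDeriv ω f s + f s) s := by
  refine ((hasDerivAt_cexp_mul_ofReal (2 * I * ω) s).mul (hasDerivAt_integral_Iic
    (integrable_jostIntegrand ω hfi) (by fun_prop) s)).congr_deriv ?_
  rw [jostIntegralDeriv, ← mul_assoc (cexp _), ← Complex.exp_add, add_neg_cancel, Complex.exp_zero]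
  ring

theorem hasDerivAt_jostIntegral (hω : ω ≠ 0) (hfi : Integrable f) (hfc : Continuous f) (s : ℝ) :
    HasDerivAt (jostIntegral ω f) (jostIntegralDeriv ω f s) s := by
  refine (((hasDerivAt_jostIntegralDeriv hfi hfc s).sub
    (hasDerivAt_integral_Iic hfi hfc s)).const_mul (2 * I * ω)⁻¹).congr_deriv ?_
  rw [add_sub_cancel_right, ← mul_assoc, inv_mul_cancel₀ (by simp [hω]), one_mul]

theorem continuous_jostIntegral (hfi : Integrable f) (hfc : Continuous f) :
    Continuous (jostIntegral ω f) :=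
  continuous_const.mul ((continuous_iff_continuousAt.2 fun s =>
    (hasDerivAt_jostIntegralDeriv hfi hfc s).continuousAt).sub (continuous_integral_Iic hfi hfc))

theorem jostIntegral_sub {g : ℝ → ℂ} (hfi : Integrable f) (hgi : Integrable g) (s : ℝ) :
    jostIntegral ω f s - jostIntegral ω g s = jostIntegral ω (f - g) s := by
  have hD : ∫ t in Iic s, cexp (-(2 * I * ω * t)) * (f t - g t) =
      (∫ t in Iic s, cexp (-(2 * I * ω * t)) * f t) -
        ∫ t in Iic s, cexp (-(2 * I * ω * t)) * g t := by
    simp only [mul_sub]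
    exact integral_sub (integrable_jostIntegrand ω hfi).integrableOn
      (integrable_jostIntegrand ω hgi).integrableOn
  simp only [jostIntegral, jostIntegralDeriv, Pi.sub_apply]
  rw [hD, integral_sub hfi.integrableOn hgi.integrableOn]
  ring

end JostIntegral

section JostMap

noncomputable def jostMap (ω : ℝ) (W : ℝ → ℝ) (u : ℝ → ℂ) (s : ℝ) : ℂ :=
  1 + jostIntegral ω (fun t => W t * u t) s

variable {ω : ℝ} {W : ℝ → ℝ}

theorem integrable_ofReal_mul_boundedContinuous (hWi : Integrable W) (u : ℝ →ᵇ ℂ) :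
    Integrable fun t => (W t : ℂ) * u t :=
  hWi.ofReal.mul_bdd u.continuous.aestronglyMeasurable (ae_of_all _ u.norm_coe_le_norm)

theorem exists_boundedContinuous_eq_jostMap (hWc : Continuous W) (hWi : Integrable W)
    (u : ℝ →ᵇ ℂ) : ∃ v : ℝ →ᵇ ℂ, ⇑v = jostMap ω W u := by
  have hfi := integrable_ofReal_mul_boundedContinuous hWi u
  refine ⟨.ofNormedAddCommGroup _ (continuous_const.add (continuous_jostIntegral hfi (by fun_prop)))
    (1 + |ω|⁻¹ * ∫ t, ‖(W t : ℂ) * u t‖) fun s => ?_, rfl⟩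
  refine (norm_add_le _ _).trans ?_
  rw [norm_one]
  gcongr
  exact (norm_jostIntegral_le s).trans (mul_le_mul_of_nonneg_left
    (setIntegral_le_integral hfi.norm (ae_of_all _ fun t => norm_nonneg _)) (by positivity))

theorem norm_jostMap_sub_le (hWi : Integrable W) (u v : ℝ →ᵇ ℂ) (s : ℝ) :
    ‖jostMap ω W u s - jostMap ω W v s‖ ≤ ∫ t in Iic s, |W t| / |ω| * ‖u t - v t‖ := by
  rw [jostMap, jostMap, add_sub_add_left_eq_sub, jostIntegral_sub
    (integrable_ofReal_mul_boundedContinuous hWi u) (integrable_ofReal_mul_boundedContinuous hWi v)]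
  refine (norm_jostIntegral_le s).trans_eq ?_
  rw [← integral_const_mul]
  congr 1 with t
  simp only [Pi.sub_apply, ← mul_sub, norm_mul, Complex.norm_real, Real.norm_eq_abs]
  ring

theorem tendsto_jostMap_atBot (u : ℝ → ℂ) : Tendsto (jostMap ω W u) atBot (𝓝 1) := by
  unfold jostMap
  simpa using tendsto_const_nhds.add tendsto_jostIntegral_atBot

end JostMap

theorem contDiff_two_of_hasDerivAt {E : Type*} [NormedAddCommGroup E] [NormedSpace ℝ E]
    {f f' f'' : ℝ → E} (hf : ∀ x, HasDerivAt f (f' x) x) (hf' : ∀ x, HasDerivAt f' (f'' x) x)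
    (hf'' : Continuous f'') : ContDiff ℝ 2 f := by
  rw [show (2 : WithTop ℕ∞) = 1 + 1 from rfl, contDiff_succ_iff_deriv, contDiff_one_iff_deriv,
    funext fun x => (hf x).deriv, funext fun x => (hf' x).deriv]
  exact ⟨fun x => (hf x).differentiableAt, by simp, fun x => (hf' x).differentiableAt, hf''⟩

section Gauge

variable {ω : ℝ} {φ φ' f : ℝ → ℂ}

theorem hasDerivAt_cexp_neg_I_mul_mul (h₁ : ∀ s, HasDerivAt φ (φ' s) s) (s : ℝ) :
    HasDerivAt (fun x : ℝ => cexp (-(I * ω * x)) * φ x)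
      (cexp (-(I * ω * s)) * (φ' s - I * ω * φ s)) s := by
  have h := (hasDerivAt_cexp_mul_ofReal (-(I * ω)) s).mul (h₁ s)
  simp only [neg_mul] at h
  exact h.congr_deriv (by ring)

theorem hasDerivAt_cexp_neg_I_mul_mul_sub (h₁ : ∀ s, HasDerivAt φ (φ' s) s)
    (h₂ : ∀ s, HasDerivAt φ' (2 * I * ω * φ' s + f s) s) (s : ℝ) :
    HasDerivAt (fun x : ℝ => cexp (-(I * ω * x)) * (φ' x - I * ω * φ x))
      (cexp (-(I * ω * s)) * (f s - ω ^ 2 * φ s)) s := by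
  have h := (hasDerivAt_cexp_mul_ofReal (-(I * ω)) s).mul ((h₂ s).sub ((h₁ s).const_mul (I * ω)))
  simp only [neg_mul, Pi.sub_apply] at h
  exact h.congr_deriv (by linear_combination (cexp (-(I * ω * s)) * ω ^ 2 * φ s) * I_sq)

variable (h₁ : ∀ s, HasDerivAt φ (φ' s) s) (h₂ : ∀ s, HasDerivAt φ' (2 * I * ω * φ' s + f s) s)
include h₁ h₂

theorem contDiff_two_cexp_neg_I_mul_mul (hf : Continuous f) :
    ContDiff ℝ 2 fun x : ℝ => cexp (-(I * ω * x)) * φ x :=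
  contDiff_two_of_hasDerivAt (hasDerivAt_cexp_neg_I_mul_mul h₁)
    (hasDerivAt_cexp_neg_I_mul_mul_sub h₁ h₂)
    (by have := continuous_iff_continuousAt.2 fun s => (h₁ s).continuousAt; fun_prop)

theorem deriv_deriv_cexp_neg_I_mul_mul_add (s : ℝ) :
    deriv (deriv fun x : ℝ => cexp (-(I * ω * x)) * φ x) s + ω ^ 2 * (cexp (-(I * ω * s)) * φ s) =
      cexp (-(I * ω * s)) * f s := by
  rw [funext fun x => (hasDerivAt_cexp_neg_I_mul_mul (ω := ω) h₁ x).deriv,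
    (hasDerivAt_cexp_neg_I_mul_mul_sub h₁ h₂ s).deriv]
  ring

end Gauge

/-- Existence of the Jost solution at `−∞` of `η'' + ω²η = Wη` for real
nonzero `ω` and continuous integrable potential `W`: there is a `C²` solution `η` with
`e^{iωs}η(s) → 1` and `(e^{iωs}η(s))' → 0` as `s → −∞`. -/
theorem jost_solution_exists
    (ω : ℝ) (hω : ω ≠ 0) (W : ℝ → ℝ) (hWc : Continuous W) (hWi : Integrable W) :
    ∃ η : ℝ → ℂ, ContDiff ℝ 2 η ∧
      (∀ s : ℝ, deriv (deriv η) s + (ω : ℂ) ^ 2 * η s = (W s : ℂ) * η s) ∧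
      Tendsto (fun s : ℝ => Complex.exp (Complex.I * ω * s) * η s) atBot (𝓝 1) ∧
      Tendsto (deriv fun s : ℝ => Complex.exp (Complex.I * ω * s) * η s) atBot (𝓝 0) := by
  obtain ⟨φ, hφ⟩ := BoundedContinuousFunction.exists_fixedPoint_of_volterra_lipschitz
    (fun t => div_nonneg (abs_nonneg (W t)) (abs_nonneg ω)) (hWc.abs.div_const _)
    (hWi.abs.div_const _) (jostMap ω W) (exists_boundedContinuous_eq_jostMap hWc hWi)
    (norm_jostMap_sub_le hWi)
  have hfi := integrable_ofReal_mul_boundedContinuous hWi φ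
  have hfc : Continuous fun t => (W t : ℂ) * φ t := by fun_prop
  have hφ' : ∀ s, HasDerivAt φ (jostIntegralDeriv ω (fun t => W t * φ t) s) s := fun s =>
    ((hasDerivAt_jostIntegral hω hfi hfc s).const_add 1).congr_of_eventuallyEq
      (Eventually.of_forall fun x => (congrFun hφ x).symm)
  have hφ'' := hasDerivAt_jostIntegralDeriv (ω := ω) hfi hfc
  have hgauge : (fun s : ℝ => cexp (I * ω * s) * (cexp (-(I * ω * s)) * φ s)) = φ :=
    funext fun s => by
      rw [← mul_assoc, ← Complex.exp_add, add_neg_cancel, Complex.exp_zero, one_mul]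
  refine ⟨fun s => cexp (-(I * ω * s)) * φ s, contDiff_two_cexp_neg_I_mul_mul hφ' hφ'' hfc,
    fun s => (deriv_deriv_cexp_neg_I_mul_mul_add hφ' hφ'' s).trans (mul_left_comm _ _ _), ?_, ?_⟩
  · rw [hgauge, ← hφ]
    exact tendsto_jostMap_atBot _
  · rw [hgauge, funext fun s => (hφ' s).deriv]
    exact tendsto_jostIntegralDeriv_atBot
end

section
/- Let ω ∈ ℝ \ {0} and let W : ℝ → ℝ be continuous with ∫_ℝ |W(s)| ds < ∞. Define the sequence of functions η⁽⁰⁾(s) = e^{iωs} and η⁽ᵏ⁺¹⁾(s) = −∫_{−∞}^s (1/ω)·sin(ω(s−σ))·W(σ)·η⁽ᵏ⁾(σ) dσ. Then for every k ∈ ℕ and every s ∈ ℝ, |η⁽ᵏ⁾(s)| ≤ (1/k!)·( |ω|^{−1} ∫_{−∞}^s |W(σ)| dσ )^k. -/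
/-! With `w = |ω|⁻¹ |W|` and `F(s) = ∫_{-∞}^s w`, the kernel `ω⁻¹ sin(ω(s-σ)) W(σ)` is
bounded by `w(σ)`, so inductively `‖η⁽ᵏ⁺¹⁾(s)‖ ≤ ∫_{-∞}^s w(σ) F(σ)^k / k! dσ`. As `F' = w`
and `F → 0` at `-∞`, this integral is `F(s)^(k+1) / (k+1)!`. -/

open Set Filter MeasureTheory Topology

theorem hasDerivAt_integral_Iic_s6 {E : Type*} [NormedAddCommGroup E] [NormedSpace ℝ E]
    [CompleteSpace E] {f : ℝ → E} (hf : Integrable f) {x : ℝ} (hfx : ContinuousAt f x) :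
    HasDerivAt (fun s => ∫ σ in Iic s, f σ) (f x) x := by
  have hsplit : (fun s => ∫ σ in Iic s, f σ)
      = fun s => (∫ σ in Iic 0, f σ) + ∫ σ in 0..s, f σ := by
    funext s
    rw [← intervalIntegral.integral_Iic_sub_Iic hf.integrableOn hf.integrableOn, add_sub_cancel]
  rw [hsplit]
  exact (intervalIntegral.integral_hasDerivAt_right hf.intervalIntegrable
    hf.aestronglyMeasurable.stronglyMeasurableAtFilter hfx).const_add _

section PrimitiveIic

variable {f : ℝ → ℝ}

theorem abs_integral_Iic_le_integral_abs (hf : Integrable f) (s : ℝ) :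
    |∫ σ in Iic s, f σ| ≤ ∫ σ, |f σ| :=
  (abs_integral_le_integral_abs).trans
    (setIntegral_le_integral hf.abs (.of_forall fun _ => abs_nonneg _))

theorem integrable_mul_pow_integral_Iic (hf : Integrable f) (hfc : Continuous f) (k : ℕ) :
    Integrable fun σ => f σ * (∫ τ in Iic σ, f τ) ^ k := by
  have hF : Continuous fun s => ∫ τ in Iic s, f τ :=
    continuous_iff_continuousAt.2 fun _ =>
      (hasDerivAt_integral_Iic_s6 hf hfc.continuousAt).continuousAt
  refine (hf.bdd_mul (c := (∫ σ, |f σ|) ^ k) (hF.pow k).aestronglyMeasurable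
    (.of_forall fun σ => ?_)).congr (.of_forall fun σ => mul_comm _ _)
  rw [Pi.pow_apply, norm_pow, Real.norm_eq_abs]
  exact pow_le_pow_left₀ (abs_nonneg _) (abs_integral_Iic_le_integral_abs hf σ) k

theorem integral_Iic_mul_pow_integral_Iic (hf : Integrable f) (hfc : Continuous f) (k : ℕ)
    (s : ℝ) :
    ∫ σ in Iic s, f σ * (∫ τ in Iic σ, f τ) ^ k
      = (∫ τ in Iic s, f τ) ^ (k + 1) / (k + 1) := by
  have hderiv : ∀ x ∈ Iic s, HasDerivAt (fun u => (∫ τ in Iic u, f τ) ^ (k + 1) / (k + 1))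
      (f x * (∫ τ in Iic x, f τ) ^ k) x := fun x _ => by
    refine (((hasDerivAt_integral_Iic_s6 hf hfc.continuousAt).fun_pow (k + 1)).div_const
      ((k : ℝ) + 1)).congr_deriv ?_
    rw [Nat.add_sub_cancel]
    push_cast
    field_simp
  have hlim : Tendsto (fun u => (∫ τ in Iic u, f τ) ^ (k + 1) / (k + 1)) atBot (𝓝 0) := by
    simpa using ((tendsto_integral_Iic_zero tendsto_id).pow (k + 1)).div_const ((k : ℝ) + 1)
  simpa using integral_Iic_of_hasDerivAt_of_tendsto' hderiv
    (integrable_mul_pow_integral_Iic hf hfc k).integrableOn hlim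

theorem integral_Iic_mul_pow_integral_Iic_div_factorial (hf : Integrable f) (hfc : Continuous f)
    (k : ℕ) (s : ℝ) :
    ∫ σ in Iic s, f σ * (1 / k.factorial * (∫ τ in Iic σ, f τ) ^ k)
      = 1 / (k + 1).factorial * (∫ τ in Iic s, f τ) ^ (k + 1) := by
  simp_rw [mul_left_comm (f _), integral_const_mul, integral_Iic_mul_pow_integral_Iic hf hfc,
    Nat.factorial_succ]
  push_cast
  field_simp

end PrimitiveIic

theorem norm_ofReal_one_div_mul_sin_mul_mul_le (ω x a : ℝ) (z : ℂ) :
    ‖((1 / ω * Real.sin x * a : ℝ) : ℂ) * z‖ ≤ |ω|⁻¹ * |a| * ‖z‖ := by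
  rw [norm_mul, Complex.norm_real, Real.norm_eq_abs, abs_mul, abs_mul, one_div, abs_inv]
  gcongr
  exact mul_le_of_le_one_right (by positivity) (Real.abs_sin_le_one x)

theorem jost_iterates_bound_general
    (ω : ℝ) (W : ℝ → ℝ) (hWc : Continuous W) (hWi : Integrable W)
    (η : ℕ → ℝ → ℂ)
    (h0 : ∀ s : ℝ, η 0 s = Complex.exp (Complex.I * ω * s))
    (hrec : ∀ k : ℕ, ∀ s : ℝ, η (k + 1) s
      = -∫ σ in Iic s, ((1 / ω * Real.sin (ω * (s - σ)) * W σ : ℝ) : ℂ) * η k σ) :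
    ∀ k : ℕ, ∀ s : ℝ,
      ‖η k s‖ ≤ (1 / k.factorial : ℝ) * (|ω|⁻¹ * ∫ σ in Iic s, |W σ|) ^ k := by
  set w : ℝ → ℝ := fun σ => |ω|⁻¹ * |W σ|
  have hwi : Integrable w := hWi.abs.const_mul _
  have hwc : Continuous w := continuous_const.mul hWc.abs
  have hw : ∀ s, |ω|⁻¹ * ∫ σ in Iic s, |W σ| = ∫ σ in Iic s, w σ :=
    fun s => (integral_const_mul _ _).symm
  intro k
  induction k with
  | zero =>
    intro s
    rw [h0, show Complex.I * ω * s = ((ω * s : ℝ) : ℂ) * Complex.I by push_cast; ring,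
      Complex.norm_exp_ofReal_mul_I]
    simp
  | succ k ih =>
    intro s
    simp only [hw] at ih ⊢
    rw [hrec, norm_neg, ← integral_Iic_mul_pow_integral_Iic_div_factorial hwi hwc]
    refine norm_integral_le_of_norm_le ?_ (.of_forall fun σ => ?_)
    · exact ((integrable_mul_pow_integral_Iic hwi hwc k).const_mul (1 / k.factorial : ℝ))
        |>.integrableOn.congr_fun (fun σ _ => by ring) measurableSet_Iic
    · exact (norm_ofReal_one_div_mul_sin_mul_mul_le ..).trans
        (mul_le_mul_of_nonneg_left (ih σ) (by positivity))

/-- The iterates of the perturbation series for the Jost solution of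
`η'' + ω²η = Wη`, given by `η⁽⁰⁾(s) = e^{iωs}` and
`η⁽ᵏ⁺¹⁾(s) = −∫_{−∞}^s ω⁻¹ sin(ω(s−σ)) W(σ) η⁽ᵏ⁾(σ) dσ`, satisfy
`|η⁽ᵏ⁾(s)| ≤ (1/k!)(|ω|⁻¹ ∫_{−∞}^s |W|)^k`. -/
theorem jost_iterates_bound
    (ω : ℝ) (hω : ω ≠ 0) (W : ℝ → ℝ) (hWc : Continuous W) (hWi : Integrable W)
    (η : ℕ → ℝ → ℂ)
    (h0 : ∀ s : ℝ, η 0 s = Complex.exp (Complex.I * ω * s))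
    (hrec : ∀ k : ℕ, ∀ s : ℝ, η (k + 1) s
      = -∫ σ in Iic s, ((1 / ω * Real.sin (ω * (s - σ)) * W σ : ℝ) : ℂ) * η k σ) :
    ∀ k : ℕ, ∀ s : ℝ,
      ‖η k s‖ ≤ (1 / k.factorial : ℝ) * (|ω|⁻¹ * ∫ σ in Iic s, |W σ|) ^ k :=
  jost_iterates_bound_general ω W hWc hWi η h0 hrec
end

section
/- Let ω ∈ ℝ \ {0} and let W : ℝ → ℝ be continuous with ∫_ℝ |W(s)| ds < ∞. Define η⁽⁰⁾(s) = e^{iωs} and η⁽ᵏ⁺¹⁾(s) = −∫_{−∞}^s (1/ω)·sin(ω(s−σ))·W(σ)·η⁽ᵏ⁾(σ) dσ. Then for every s ∈ ℝ the series Σ_{k=0}^∞ η⁽ᵏ⁾(s) converges absolutely, and its sum η(s) satisfies |η(s)| ≤ exp( |ω|^{−1} ∫_ℝ |W(σ)| dσ ); in particular |η(s)| ≤ 1 + O(1/|ω|) uniformly in s as |ω| → ∞. -/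
/-!
Write `F(s) = ∫_{-∞}^s |W|`. Since `|sin| ≤ 1`, the kernel of the recursion is bounded by
`|ω|⁻¹ |W(σ)|`, and because `F' = |W|` with `F(-∞) = 0` we have
`∫_{-∞}^s |W| F^k = F(s)^{k+1}/(k+1)`. By induction `|η⁽ᵏ⁾(s)| ≤ (F(s)/|ω|)^k / k!`, so the
series is dominated by the exponential series of `F(s)/|ω| ≤ |ω|⁻¹ ∫ |W|`. The large-`|ω|`
bound is `eˣ ≤ 1 + x eˣ`.
-/

open Set Filter MeasureTheory Topology

noncomputable section

def tailIntegral (g : ℝ → ℝ) (t : ℝ) : ℝ := ∫ σ in Iic t, g σ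

section TailIntegral

variable {g : ℝ → ℝ}

lemma tailIntegral_nonneg (hg : 0 ≤ g) (t : ℝ) : 0 ≤ tailIntegral g t :=
  setIntegral_nonneg measurableSet_Iic fun σ _ => hg σ

lemma tailIntegral_le_integral (hg : 0 ≤ g) (hgi : Integrable g) (t : ℝ) :
    tailIntegral g t ≤ ∫ σ, g σ :=
  setIntegral_le_integral hgi (Eventually.of_forall hg)

lemma tailIntegral_eq_add_intervalIntegral (hgi : Integrable g) (a t : ℝ) :
    tailIntegral g t = tailIntegral g a + ∫ σ in a..t, g σ := by
  rw [← intervalIntegral.integral_Iic_sub_Iic hgi.integrableOn hgi.integrableOn, tailIntegral,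
    tailIntegral, add_sub_cancel]

lemma tendsto_tailIntegral_atBot (hgi : Integrable g) :
    Tendsto (tailIntegral g) atBot (𝓝 0) := by
  have h := intervalIntegral_tendsto_integral_Iic 0 hgi.integrableOn tendsto_id
  have hF : tailIntegral g = fun a => tailIntegral g 0 - ∫ σ in a..0, g σ :=
    funext fun a => by rw [tailIntegral_eq_add_intervalIntegral hgi a 0, add_sub_cancel_right]
  rw [hF]
  simpa [tailIntegral] using (tendsto_const_nhds (x := tailIntegral g 0)).sub h

lemma hasDerivAt_tailIntegral (hgc : Continuous g) (hgi : Integrable g) (t : ℝ) :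
    HasDerivAt (tailIntegral g) (g t) t := by
  have hF : tailIntegral g = fun u => tailIntegral g 0 + ∫ σ in (0 : ℝ)..u, g σ :=
    funext (tailIntegral_eq_add_intervalIntegral hgi 0)
  rw [hF]
  exact ((hgc.integral_hasStrictDerivAt 0 t).hasDerivAt).const_add _

lemma integrableOn_mul_pow_tailIntegral (hg : 0 ≤ g) (hgc : Continuous g) (hgi : Integrable g)
    (k : ℕ) (s : Set ℝ) : IntegrableOn (fun σ => g σ * tailIntegral g σ ^ k) s := by
  have hFc : Continuous (tailIntegral g) :=
    continuous_iff_continuousAt.2 fun t => (hasDerivAt_tailIntegral hgc hgi t).continuousAt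
  refine hgi.integrableOn.mul_bdd (c := (∫ σ, g σ) ^ k) (hFc.pow k).aestronglyMeasurable
    (ae_of_all _ fun σ => ?_)
  rw [Real.norm_of_nonneg (pow_nonneg (tailIntegral_nonneg hg σ) k)]
  exact pow_le_pow_left₀ (tailIntegral_nonneg hg σ) (tailIntegral_le_integral hg hgi σ) k

lemma setIntegral_Iic_mul_pow_tailIntegral (hg : 0 ≤ g) (hgc : Continuous g)
    (hgi : Integrable g) (k : ℕ) (s : ℝ) :
    ∫ σ in Iic s, g σ * tailIntegral g σ ^ k = tailIntegral g s ^ (k + 1) / (k + 1) := by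
  have hderiv : ∀ t ∈ Iic s, HasDerivAt (fun u => tailIntegral g u ^ (k + 1) / (k + 1))
      (g t * tailIntegral g t ^ k) t := fun t _ => by
    refine (((hasDerivAt_tailIntegral hgc hgi t).pow (k + 1)).div_const
      ((k : ℝ) + 1)).congr_deriv ?_
    push_cast
    field_simp
  have hlim : Tendsto (fun u => tailIntegral g u ^ (k + 1) / (k + 1)) atBot (𝓝 0) := by
    simpa using ((tendsto_tailIntegral_atBot hgi).pow (k + 1)).div_const ((k : ℝ) + 1)
  rw [integral_Iic_of_hasDerivAt_of_tendsto' hderiv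
    (integrableOn_mul_pow_tailIntegral hg hgc hgi k _) hlim, sub_zero]

lemma norm_setIntegral_Iic_le_of_norm_le_mul_pow {E : Type*} [NormedAddCommGroup E]
    [NormedSpace ℝ E] (hg : 0 ≤ g) (hgc : Continuous g) (hgi : Integrable g) {f : ℝ → E}
    {C : ℝ} {k : ℕ} (hf : ∀ σ, ‖f σ‖ ≤ C * (g σ * tailIntegral g σ ^ k)) (s : ℝ) :
    ‖∫ σ in Iic s, f σ‖ ≤ C * (tailIntegral g s ^ (k + 1) / (k + 1)) := by
  calc ‖∫ σ in Iic s, f σ‖ ≤ ∫ σ in Iic s, C * (g σ * tailIntegral g σ ^ k) :=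
        norm_integral_le_of_norm_le
          ((integrableOn_mul_pow_tailIntegral hg hgc hgi k _).const_mul C) (ae_of_all _ hf)
    _ = C * (tailIntegral g s ^ (k + 1) / (k + 1)) := by
        rw [integral_const_mul, setIntegral_Iic_mul_pow_tailIntegral hg hgc hgi]

end TailIntegral

lemma norm_jost_kernel_le (ω s σ w : ℝ) :
    ‖((1 / ω * Real.sin (ω * (s - σ)) * w : ℝ) : ℂ)‖ ≤ |ω|⁻¹ * |w| := by
  rw [Complex.norm_real, Real.norm_eq_abs, abs_mul, abs_mul, one_div, abs_inv]
  gcongr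
  exact mul_le_of_le_one_right (by positivity) (Real.abs_sin_le_one _)

lemma norm_jost_term_le (W : ℝ → ℝ) (hWc : Continuous W) (hWi : Integrable W) (ω : ℝ)
    (η : ℕ → ℝ → ℂ) (h0 : ∀ s : ℝ, η 0 s = Complex.exp (Complex.I * ω * s))
    (hrec : ∀ k : ℕ, ∀ s : ℝ, η (k + 1) s
      = -∫ σ in Iic s, ((1 / ω * Real.sin (ω * (s - σ)) * W σ : ℝ) : ℂ) * η k σ)
    (k : ℕ) (s : ℝ) :
    ‖η k s‖ ≤ (|ω|⁻¹ * tailIntegral (fun σ => |W σ|) s) ^ k / k.factorial := by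
  set F := tailIntegral (fun σ => |W σ|)
  induction k generalizing s with
  | zero => simp [h0, Complex.norm_exp, Complex.mul_re]
  | succ k ih =>
    have hterm : ∀ σ, ‖((1 / ω * Real.sin (ω * (s - σ)) * W σ : ℝ) : ℂ) * η k σ‖
        ≤ |ω|⁻¹ ^ (k + 1) / k.factorial * (|W σ| * F σ ^ k) := fun σ => by
      rw [norm_mul]
      calc _ ≤ |ω|⁻¹ * |W σ| * ((|ω|⁻¹ * F σ) ^ k / k.factorial) :=
            mul_le_mul (norm_jost_kernel_le ω s σ (W σ)) (ih σ) (norm_nonneg _) (by positivity)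
        _ = _ := by ring
    rw [hrec, norm_neg]
    refine (norm_setIntegral_Iic_le_of_norm_le_mul_pow (fun σ => abs_nonneg (W σ))
      hWc.abs hWi.abs hterm s).trans_eq ?_
    rw [Nat.factorial_succ]
    push_cast
    field_simp
    ring

lemma Real.exp_le_one_add_mul_exp (x : ℝ) : Real.exp x ≤ 1 + x * Real.exp x := by
  have h := mul_le_mul_of_nonneg_right (Real.add_one_le_exp (-x)) (Real.exp_pos x).le
  rw [← Real.exp_add, neg_add_cancel, Real.exp_zero] at h
  linarith

lemma Real.exp_inv_mul_le_one_add_div {A r : ℝ} (hA : 0 ≤ A) (hr : 1 ≤ r) :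
    Real.exp (r⁻¹ * A) ≤ 1 + A * Real.exp A / r := by
  have hxA : r⁻¹ * A ≤ A := mul_le_of_le_one_left hA (inv_le_one_of_one_le₀ hr)
  calc Real.exp (r⁻¹ * A) ≤ 1 + r⁻¹ * A * Real.exp (r⁻¹ * A) :=
        Real.exp_le_one_add_mul_exp _
    _ ≤ 1 + r⁻¹ * A * Real.exp A := by gcongr
    _ = 1 + A * Real.exp A / r := by ring

/-- The perturbation series `Σ η⁽ᵏ⁾(s)` for the Jost solution of
`η'' + ω²η = Wη` converges absolutely for every `s` (when `ω ≠ 0`), and its sum is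
bounded by `exp(|ω|⁻¹ ∫|W|)`; in particular the sum is bounded by `1 + O(1/|ω|)`
uniformly in `s` as `|ω| → ∞`. -/
theorem jost_series_bound
    (W : ℝ → ℝ) (hWc : Continuous W) (hWi : Integrable W)
    (η : ℝ → ℕ → ℝ → ℂ)
    (h0 : ∀ ω : ℝ, ∀ s : ℝ, η ω 0 s = Complex.exp (Complex.I * ω * s))
    (hrec : ∀ ω : ℝ, ∀ k : ℕ, ∀ s : ℝ, η ω (k + 1) s
      = -∫ σ in Iic s, ((1 / ω * Real.sin (ω * (s - σ)) * W σ : ℝ) : ℂ) * η ω k σ) :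
    (∀ ω : ℝ, ω ≠ 0 → ∀ s : ℝ, Summable (fun k => ‖η ω k s‖) ∧
      ‖∑' k, η ω k s‖ ≤ Real.exp (|ω|⁻¹ * ∫ σ, |W σ|)) ∧
    ∃ C > 0, ∃ Ω > 0, ∀ ω : ℝ, Ω ≤ |ω| → ∀ s : ℝ,
      ‖∑' k, η ω k s‖ ≤ 1 + C / |ω| := by
  set A := ∫ σ, |W σ|
  have hA : 0 ≤ A := integral_nonneg fun σ => abs_nonneg (W σ)
  have hterm : ∀ ω s k, ‖η ω k s‖ ≤ (|ω|⁻¹ * A) ^ k / k.factorial := fun ω s k =>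
    (norm_jost_term_le W hWc hWi ω (η ω) (h0 ω) (hrec ω) k s).trans <| by
      gcongr
      · exact mul_nonneg (by positivity) (tailIntegral_nonneg (fun σ => abs_nonneg (W σ)) s)
      · exact tailIntegral_le_integral (fun σ => abs_nonneg (W σ)) hWi.abs s
  have hexp : ∀ x : ℝ, HasSum (fun k : ℕ => x ^ k / k.factorial) (Real.exp x) := fun x => by
    rw [Real.exp_eq_exp_ℝ]
    exact NormedSpace.expSeries_div_hasSum_exp x
  have hbound : ∀ ω s, ‖∑' k, η ω k s‖ ≤ Real.exp (|ω|⁻¹ * A) := fun ω s =>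
    tsum_of_norm_bounded (hexp _) (hterm ω s)
  have hsummable : ∀ ω s, Summable (fun k => ‖η ω k s‖) := fun ω s =>
    (hexp _).summable.of_nonneg_of_le (fun k => norm_nonneg _) (hterm ω s)
  refine ⟨fun ω _ s => ⟨hsummable ω s, hbound ω s⟩, A * Real.exp A + 1, by positivity,
    1, one_pos, fun ω hω s => ?_⟩
  calc ‖∑' k, η ω k s‖ ≤ 1 + A * Real.exp A / |ω| :=
        (hbound ω s).trans (Real.exp_inv_mul_le_one_add_div hA hω)
    _ ≤ 1 + (A * Real.exp A + 1) / |ω| := by gcongr; linarith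
end
end

section
/- Let ω ∈ ℝ \ {0} and let W : ℝ → ℝ be continuous. Let η₁, η₂ : ℝ → ℂ be twice continuously differentiable solutions of η'' + ω²η = Wη satisfying the asymptotic boundary conditions lim_{s→−∞} e^{iωs}η₁(s) = 1, lim_{s→−∞} (e^{iωs}η₁(s))' = 0, lim_{s→∞} e^{−iωs}η₂(s) = 1, and lim_{s→∞} (e^{−iωs}η₂(s))' = 0. Then the Wronskian w(η₁,η₂) := η₁η₂' − η₁'η₂ is nonzero (at every point of ℝ); in particular η₁ and η₂ are linearly independent. -/
/-!
The self-Wronskian `J η = η η̄' − η' η̄` is the Wronskian of `η` and `η̄`, which solves the same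
equation because the potential is real; hence `J η` is constant. The asymptotics of the Jost
solutions give `J η₁ = 2iω` and `J η₂ = −2iω`. If `w(η₁, η₂)` vanished at some point, the Cauchy
data of `η₁` and `η₂` there would be proportional, which forces `|η₂|² J η₁ = |η₁|² J η₂`. As the
two values of `J` have opposite signs, `η₁` and `η₂` would both vanish there, contradicting
`J η₁ ≠ 0`.
-/

open Filter Topology ComplexConjugate

noncomputable def selfWronskian (η : ℝ → ℂ) (s : ℝ) : ℂ :=
  η s * conj (deriv η s) - deriv η s * conj (η s)

theorem selfWronskian_eq_of_deriv_deriv_eq_real_mul {η : ℝ → ℂ} {V : ℝ → ℝ}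
    (hη : Differentiable ℝ η) (hη' : Differentiable ℝ (deriv η))
    (heq : ∀ s, deriv (deriv η) s = V s * η s) (s t : ℝ) :
    selfWronskian η s = selfWronskian η t := by
  have hJ : ∀ x, HasDerivAt (selfWronskian η) 0 x := by
    intro x
    have h₀ := (hη x).hasDerivAt
    have h₁ := (hη' x).hasDerivAt
    refine ((h₀.mul h₁.star).sub (h₁.mul h₀.star)).congr_deriv ?_
    rw [heq x, star_mul', Complex.star_def, Complex.conj_ofReal]
    ring
  exact is_const_of_deriv_eq_zero (fun x => (hJ x).differentiableAt)
    (fun x => (hJ x).deriv) s t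

theorem selfWronskian_eq_of_tendsto {η : ℝ → ℂ} {V : ℝ → ℝ} {l : Filter ℝ} [l.NeBot] {L : ℂ}
    (hη : Differentiable ℝ η) (hη' : Differentiable ℝ (deriv η))
    (heq : ∀ s, deriv (deriv η) s = V s * η s) (hL : Tendsto (selfWronskian η) l (𝓝 L))
    (s : ℝ) : selfWronskian η s = L := by
  have hconst : selfWronskian η = fun _ => selfWronskian η s :=
    funext fun t => selfWronskian_eq_of_deriv_deriv_eq_real_mul hη hη' heq t s
  rw [hconst] at hL
  exact tendsto_const_nhds_iff.mp hL

theorem hasDerivAt_exp_I_mul (k s : ℝ) :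
    HasDerivAt (fun s : ℝ => Complex.exp (Complex.I * k * s))
      (Complex.I * k * Complex.exp (Complex.I * k * s)) s := by
  simpa [mul_comm] using ((hasDerivAt_id (s : ℂ)).const_mul (Complex.I * k)).cexp.comp_ofReal

theorem exp_I_mul_mul_conj (k s : ℝ) :
    Complex.exp (Complex.I * k * s) * conj (Complex.exp (Complex.I * k * s)) = 1 := by
  rw [← Complex.exp_conj, ← Complex.exp_add]
  simp

theorem tendsto_selfWronskian_of_tendsto_exp_I_mul {η : ℝ → ℂ} {k : ℝ} {l : Filter ℝ}
    (hη : Differentiable ℝ η)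
    (h : Tendsto (fun s : ℝ => Complex.exp (Complex.I * k * s) * η s) l (𝓝 1))
    (h' : Tendsto (deriv fun s : ℝ => Complex.exp (Complex.I * k * s) * η s) l (𝓝 0)) :
    Tendsto (selfWronskian η) l (𝓝 (2 * Complex.I * k)) := by
  set φ := fun s : ℝ => Complex.exp (Complex.I * k * s) * η s
  set ψ := fun s : ℝ => Complex.exp (Complex.I * k * s) * deriv η s
  have hψφ : ∀ s, ψ s = deriv φ s - Complex.I * k * φ s := fun s => by
    have hφ : HasDerivAt φ _ s := (hasDerivAt_exp_I_mul k s).mul (hη s).hasDerivAt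
    rw [hφ.deriv]
    ring
  have hψ : Tendsto ψ l (𝓝 (-(Complex.I * k))) := by
    simpa [← hψφ] using h'.sub (h.const_mul (Complex.I * k))
  have hJ : ∀ s, selfWronskian η s = φ s * conj (ψ s) - ψ s * conj (φ s) := fun s => by
    simp only [selfWronskian, φ, ψ, map_mul]
    linear_combination -(η s * conj (deriv η s) - deriv η s * conj (η s)) *
      exp_I_mul_mul_conj k s
  have hlim := (h.mul hψ.star).sub (hψ.mul h.star)
  simp only [Complex.star_def] at hlim
  convert hlim using 2 with s
  · exact hJ s
  · rw [map_neg, map_mul, Complex.conj_I, Complex.conj_ofReal, map_one]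
    ring

theorem normSq_mul_selfWronskian_eq {η₁ η₂ : ℝ → ℂ} {s : ℝ}
    (hw : η₁ s * deriv η₂ s - deriv η₁ s * η₂ s = 0) :
    Complex.normSq (η₂ s) * selfWronskian η₁ s = Complex.normSq (η₁ s) * selfWronskian η₂ s := by
  have hw' : conj (η₁ s) * conj (deriv η₂ s) - conj (deriv η₁ s) * conj (η₂ s) = 0 := by
    simpa only [map_sub, map_mul, map_zero] using congrArg conj hw
  simp only [selfWronskian, ← Complex.mul_conj]
  linear_combination (conj (η₁ s) * conj (η₂ s)) * hw - (η₁ s * η₂ s) * hw'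

theorem wronskian_ne_zero_of_selfWronskian_eq {η₁ η₂ : ℝ → ℂ} {k s : ℝ} (hk : k ≠ 0)
    (h₁ : selfWronskian η₁ s = 2 * Complex.I * k)
    (h₂ : selfWronskian η₂ s = -(2 * Complex.I * k)) :
    η₁ s * deriv η₂ s - deriv η₁ s * η₂ s ≠ 0 := by
  intro hw
  have hIk : 2 * Complex.I * k ≠ 0 := by simp [hk]
  have hprop := normSq_mul_selfWronskian_eq hw
  rw [h₁, h₂] at hprop
  have hsum : ((Complex.normSq (η₁ s) + Complex.normSq (η₂ s) : ℝ) : ℂ) * (2 * Complex.I * k)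
      = 0 := by
    push_cast
    linear_combination hprop
  have hη₁ : η₁ s = 0 := by
    have := Complex.ofReal_eq_zero.mp ((mul_eq_zero.mp hsum).resolve_right hIk)
    refine Complex.normSq_eq_zero.mp ?_
    linarith [Complex.normSq_nonneg (η₁ s), Complex.normSq_nonneg (η₂ s)]
  refine hIk ?_
  rw [← h₁, selfWronskian, hη₁]
  simp

theorem linearIndependent_pair_of_wronskian_ne_zero {𝕜 𝕂 : Type*} [NontriviallyNormedField 𝕜]
    [NontriviallyNormedField 𝕂] [NormedAlgebra 𝕜 𝕂] {f g : 𝕜 → 𝕂} {s : 𝕜}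
    (hf : DifferentiableAt 𝕜 f s) (hg : DifferentiableAt 𝕜 g s)
    (hw : f s * deriv g s - deriv f s * g s ≠ 0) : LinearIndependent 𝕂 ![f, g] := by
  rw [LinearIndependent.pair_iff]
  intro a b hab
  have hval : ∀ x, a * f x + b * g x = 0 := fun x => by simpa using congrFun hab x
  have hder : a * deriv f s + b * deriv g s = 0 := by
    have hD : HasDerivAt (a • f + b • g) (a * deriv f s + b * deriv g s) s :=
      (hf.hasDerivAt.const_smul a).add (hg.hasDerivAt.const_smul b)
    rw [hab] at hD
    exact hD.unique (hasDerivAt_const s 0)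
  constructor
  · refine (mul_eq_zero.mp ?_).resolve_right hw
    linear_combination deriv g s * hval s - g s * hder
  · refine (mul_eq_zero.mp ?_).resolve_right hw
    linear_combination f s * hder - deriv f s * hval s

theorem jost_wronskian_nonzero_general
    (ω : ℝ) (hω : ω ≠ 0) (W : ℝ → ℝ)
    (η₁ η₂ : ℝ → ℂ) (h₁ : ContDiff ℝ 2 η₁) (h₂ : ContDiff ℝ 2 η₂)
    (heq₁ : ∀ s : ℝ, deriv (deriv η₁) s + (ω : ℂ) ^ 2 * η₁ s = (W s : ℂ) * η₁ s)
    (heq₂ : ∀ s : ℝ, deriv (deriv η₂) s + (ω : ℂ) ^ 2 * η₂ s = (W s : ℂ) * η₂ s)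
    (hbc₁ : Tendsto (fun s : ℝ => Complex.exp (Complex.I * ω * s) * η₁ s) atBot (𝓝 1))
    (hbc₁' : Tendsto (deriv fun s : ℝ => Complex.exp (Complex.I * ω * s) * η₁ s)
      atBot (𝓝 0))
    (hbc₂ : Tendsto (fun s : ℝ => Complex.exp (-(Complex.I * ω * s)) * η₂ s) atTop (𝓝 1))
    (hbc₂' : Tendsto (deriv fun s : ℝ => Complex.exp (-(Complex.I * ω * s)) * η₂ s)
      atTop (𝓝 0)) :
    (∀ s : ℝ, η₁ s * deriv η₂ s - deriv η₁ s * η₂ s ≠ 0) ∧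
    LinearIndependent ℂ ![η₁, η₂] := by
  have hd₁ : Differentiable ℝ η₁ := h₁.differentiable (by norm_num)
  have hd₂ : Differentiable ℝ η₂ := h₂.differentiable (by norm_num)
  have hV : ∀ η : ℝ → ℂ, (∀ s, deriv (deriv η) s + (ω : ℂ) ^ 2 * η s = W s * η s) →
      ∀ s, deriv (deriv η) s = ((W s - ω ^ 2 : ℝ) : ℂ) * η s := fun η heq s => by
    push_cast
    linear_combination heq s
  have hphase : ∀ s : ℝ, -(Complex.I * ω * s) = Complex.I * ((-ω : ℝ) : ℂ) * s := fun s => by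
    push_cast
    ring
  simp only [hphase] at hbc₂ hbc₂'
  have hJ₁ := selfWronskian_eq_of_tendsto hd₁ h₁.differentiable_deriv_two (hV η₁ heq₁)
    (tendsto_selfWronskian_of_tendsto_exp_I_mul hd₁ hbc₁ hbc₁')
  have hJ₂ := selfWronskian_eq_of_tendsto hd₂ h₂.differentiable_deriv_two (hV η₂ heq₂)
    (tendsto_selfWronskian_of_tendsto_exp_I_mul hd₂ hbc₂ hbc₂')
  have hw : ∀ s, η₁ s * deriv η₂ s - deriv η₁ s * η₂ s ≠ 0 := fun s =>
    wronskian_ne_zero_of_selfWronskian_eq hω (hJ₁ s) (by rw [hJ₂ s]; push_cast; ring)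
  exact ⟨hw, linearIndependent_pair_of_wronskian_ne_zero (hd₁ 0) (hd₂ 0) (hw 0)⟩

/-- For real nonzero `ω` and continuous real `W`, the Jost solutions
`η₁` (at `−∞`) and `η₂` (at `+∞`) of `η'' + ω²η = Wη` have nonvanishing Wronskian
`η₁η₂' − η₁'η₂`; in particular they are linearly independent. -/
theorem jost_wronskian_nonzero
    (ω : ℝ) (hω : ω ≠ 0) (W : ℝ → ℝ) (hWc : Continuous W)
    (η₁ η₂ : ℝ → ℂ) (h₁ : ContDiff ℝ 2 η₁) (h₂ : ContDiff ℝ 2 η₂)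
    (heq₁ : ∀ s : ℝ, deriv (deriv η₁) s + (ω : ℂ) ^ 2 * η₁ s = (W s : ℂ) * η₁ s)
    (heq₂ : ∀ s : ℝ, deriv (deriv η₂) s + (ω : ℂ) ^ 2 * η₂ s = (W s : ℂ) * η₂ s)
    (hbc₁ : Tendsto (fun s : ℝ => Complex.exp (Complex.I * ω * s) * η₁ s) atBot (𝓝 1))
    (hbc₁' : Tendsto (deriv fun s : ℝ => Complex.exp (Complex.I * ω * s) * η₁ s)
      atBot (𝓝 0))
    (hbc₂ : Tendsto (fun s : ℝ => Complex.exp (-(Complex.I * ω * s)) * η₂ s) atTop (𝓝 1))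
    (hbc₂' : Tendsto (deriv fun s : ℝ => Complex.exp (-(Complex.I * ω * s)) * η₂ s)
      atTop (𝓝 0)) :
    (∀ s : ℝ, η₁ s * deriv η₂ s - deriv η₁ s * η₂ s ≠ 0) ∧
    LinearIndependent ℂ ![η₁, η₂] :=
  jost_wronskian_nonzero_general ω hω W η₁ η₂ h₁ h₂ heq₁ heq₂ hbc₁ hbc₁' hbc₂ hbc₂'
end

section
/- Let r₀ > 0, let w : [r₀,∞) → ℝ be continuously differentiable, let A : [r₀,∞) → ℝ be twice continuously differentiable with A(r₀) = 0 and A(r) > 0 for r > r₀, satisfying rA'(r) + (1 + 2w'(r)²)A(r) = 1 − (1 − w(r)²)²/r² for all r ≥ r₀ with r₀ − (1 − w(r₀)²)²/r₀ ≠ 0, and let T : (r₀,∞) → ℝ be positive and continuously differentiable satisfying 2rA(r)·(T'(r)/T(r)) = (1 − w(r)²)²/r² + (1 − 2w'(r)²)A(r) − 1 for all r > r₀. Then T'(r)/T(r) = −1/(2(r − r₀)) + O(1) as r → r₀⁺; that is, T'(r)/T(r) + 1/(2(r − r₀)) is bounded on some interval (r₀, r₀ + δ). -/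
open Set Filter Asymptotics Topology

/-!
Eliminating the first field equation from the second gives `T'/T = -A'/(2A) - 2w'²/r`, so the
claim is that the logarithmic derivative `A'/A` of `A` has the pole `1/(r - r₀)` with bounded
remainder. The hypothesis `r₀ - (1 - w(r₀)²)²/r₀ ≠ 0` says, through the first field equation at the
horizon, that `A'(r₀) ≠ 0`, i.e. the zero of `A` is simple. Then `A(r) ≍ r - r₀`, and since `A'` is
differentiable at `r₀` the mean value theorem gives `A(r) - A'(r)(r - r₀) = O((r - r₀)²)`, whence
`A'/A - 1/(r - r₀) = -(A - A'(r - r₀)) / (A (r - r₀)) = O(1)`.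
-/

theorem HasDerivWithinAt.sub_isBigO_sub {f : ℝ → ℝ} {f' a : ℝ} {s : Set ℝ}
    (hf : HasDerivWithinAt f f' s a) (hf' : f' ≠ 0) :
    (fun x ↦ x - a) =O[𝓝[s] a] fun x ↦ f x - f a :=
  (HasDerivAtFilter.isTheta_sub hf hf').isBigO_symm.comp_tendsto
    (tendsto_id.prodMk tendsto_const_pure)

namespace Convex

variable {f f' : ℝ → ℝ} {s : Set ℝ} {a : ℝ}

theorem isBigO_pow_succ_real {n : ℕ} (hs : Convex ℝ s) (has : a ∈ s)
    (hff' : ∀ x ∈ s, HasDerivWithinAt f (f' x) s x) (hf' : f' =O[𝓝[s] a] fun x ↦ (x - a) ^ n) :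
    (fun x ↦ f x - f a) =O[𝓝[s] a] fun x ↦ (x - a) ^ (n + 1) := by
  obtain ⟨c, hc, hfc⟩ := hf'.exists_pos
  refine IsBigO.of_bound c ?_
  filter_upwards [self_mem_nhdsWithin, hs.eventually_nhdsWithin_segment has hfc.bound]
    with x hxs hbound
  have hseg : segment ℝ a x ⊆ s := hs.segment_subset has hxs
  have hderiv : ∀ y ∈ segment ℝ a x, ‖f' y‖ ≤ c * |x - a| ^ n := fun y hy ↦ by
    refine (hbound y hy).trans ?_
    rw [norm_pow, Real.norm_eq_abs]
    exact mul_le_mul_of_nonneg_left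
      (pow_le_pow_left₀ (abs_nonneg _) (norm_sub_le_of_mem_segment hy) n) hc.le
  have := (convex_segment a x).norm_image_sub_le_of_norm_hasDerivWithin_le
    (fun y hy ↦ (hff' y (hseg hy)).mono hseg) hderiv
    (left_mem_segment ℝ a x) (right_mem_segment ℝ a x)
  simpa [pow_succ, mul_assoc] using this

theorem isBigO_sub_sub_deriv_mul_sub_sq {f'' : ℝ} (hs : Convex ℝ s) (has : a ∈ s)
    (hff' : ∀ x ∈ s, HasDerivWithinAt f (f' x) s x) (hf'' : HasDerivWithinAt f' f'' s a) :
    (fun x ↦ f x - f a - f' x * (x - a)) =O[𝓝[s] a] fun x ↦ (x - a) ^ 2 := by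
  have hf'_sub : (fun x ↦ f' x - f' a) =O[𝓝[s] a] fun x ↦ (x - a) ^ 1 := by
    simpa using hf''.hasFDerivWithinAt.isBigO_sub
  have hlin : (fun x ↦ f x - f' a * (x - a) - (f a - f' a * (a - a))) =O[𝓝[s] a]
      fun x ↦ (x - a) ^ (1 + 1) :=
    hs.isBigO_pow_succ_real has
      (fun x hx ↦ (hff' x hx).sub (((hasDerivWithinAt_id x s).sub_const a).const_mul (f' a)))
      (by simpa using hf'_sub)
  have hquad : (fun x ↦ (f' x - f' a) * (x - a)) =O[𝓝[s] a] fun x ↦ (x - a) ^ 1 * (x - a) :=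
    hf'_sub.mul (isBigO_refl _ _)
  exact (hlin.sub hquad).congr (fun x ↦ by ring) (fun x ↦ by ring)

theorem div_sub_inv_sub_isBigO_one {f'' : ℝ} (hs : Convex ℝ s) (has : a ∈ s)
    (hff' : ∀ x ∈ s, HasDerivWithinAt f (f' x) s x) (hf'' : HasDerivWithinAt f' f'' s a)
    (hfa : f a = 0) (hf'a : f' a ≠ 0) :
    (fun x ↦ f' x / f x - (x - a)⁻¹) =O[𝓝[s \ {a}] a] fun _ ↦ (1 : ℝ) := by
  have hpunctured : 𝓝[s \ {a}] a ≤ 𝓝[s] a := nhdsWithin_mono _ sdiff_subset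
  have hsub : (fun x ↦ x - a) =O[𝓝[s] a] f := by
    simpa [hfa] using (hff' a has).sub_isBigO_sub hf'a
  have hinv : (fun x ↦ (f x)⁻¹) =O[𝓝[s] a] fun x ↦ (x - a)⁻¹ :=
    hsub.inv_rev (Eventually.of_forall fun x hx ↦ by rw [sub_eq_zero.mp hx, hfa])
  have hquotient : (fun x ↦ (f x - f a - f' x * (x - a)) * (f x)⁻¹ * (x - a)⁻¹)
      =O[𝓝[s \ {a}] a] fun _ ↦ (1 : ℝ) := by
    refine (((hs.isBigO_sub_sub_deriv_mul_sub_sq has hff' hf'').mul hinv).mul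
      (isBigO_refl _ _)).mono hpunctured |>.trans_eventuallyEq ?_
    filter_upwards [self_mem_nhdsWithin] with x ⟨_, hxa⟩
    field_simp [sub_ne_zero.mpr hxa]
  refine hquotient.neg_left.congr' ?_ EventuallyEq.rfl
  filter_upwards [self_mem_nhdsWithin, hpunctured hsub.eq_zero_imp] with x ⟨_, hxa⟩ hzero
  have hfx : f x ≠ 0 := fun h ↦ hxa (sub_eq_zero.mp (hzero h))
  field_simp [sub_ne_zero.mpr hxa]
  rw [hfa]
  ring

end Convex

theorem exists_abs_le_on_Ioo_of_isBigO_one {f : ℝ → ℝ} {a : ℝ}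
    (hf : f =O[𝓝[>] a] fun _ ↦ (1 : ℝ)) :
    ∃ δ > 0, ∃ C : ℝ, ∀ x ∈ Ioo a (a + δ), |f x| ≤ C := by
  obtain ⟨C, hC⟩ := hf.bound
  obtain ⟨u, hau, hu⟩ := mem_nhdsGT_iff_exists_Ioo_subset.mp hC
  refine ⟨u - a, sub_pos.mpr hau, C, fun x hx ↦ ?_⟩
  simpa using hu (by simpa using hx)

theorem eym_T_log_derivative_horizon_general
    (r₀ : ℝ) (hr₀ : 0 < r₀) (w w' A A' T T' : ℝ → ℝ)
    (hw'c : ContinuousOn w' (Ici r₀))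
    (hA : ∀ r ∈ Ici r₀, HasDerivWithinAt A (A' r) (Ici r₀) r)
    (hA'C1 : ContDiffOn ℝ 1 A' (Ici r₀))
    (hA0 : A r₀ = 0) (hApos : ∀ r ∈ Ioi r₀, 0 < A r)
    (heq1 : ∀ r ∈ Ici r₀,
      r * A' r + (1 + 2 * w' r ^ 2) * A r = 1 - (1 - w r ^ 2) ^ 2 / r ^ 2)
    (hnz : r₀ - (1 - w r₀ ^ 2) ^ 2 / r₀ ≠ 0)
    (heq2 : ∀ r ∈ Ioi r₀, 2 * r * A r * (T' r / T r)
      = (1 - w r ^ 2) ^ 2 / r ^ 2 + (1 - 2 * w' r ^ 2) * A r - 1) :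
    ∃ δ > 0, ∃ C : ℝ, ∀ r ∈ Ioo r₀ (r₀ + δ),
      |T' r / T r + 1 / (2 * (r - r₀))| ≤ C := by
  have hA'r₀ : A' r₀ ≠ 0 := by
    intro h
    have hhorizon := heq1 r₀ self_mem_Ici
    rw [h, hA0] at hhorizon
    apply hnz
    field_simp at hhorizon ⊢
    linarith
  have hlogA : (fun r ↦ A' r / A r - (r - r₀)⁻¹) =O[𝓝[>] r₀] fun _ ↦ (1 : ℝ) := by
    simpa using (convex_Ici r₀).div_sub_inv_sub_isBigO_one self_mem_Ici hA
      (hA'C1.differentiableOn one_ne_zero r₀ self_mem_Ici).hasDerivWithinAt hA0 hA'r₀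
  have hcoupling : (fun r ↦ 2 * w' r ^ 2 / r) =O[𝓝[>] r₀] fun _ ↦ (1 : ℝ) := by
    have : ContinuousWithinAt (fun r ↦ 2 * w' r ^ 2 / r) (Ici r₀) r₀ :=
      ((hw'c r₀ self_mem_Ici).pow 2).const_mul 2 |>.div continuousWithinAt_id hr₀.ne'
    exact (this.tendsto.isBigO_one ℝ).mono (nhdsWithin_mono _ Ioi_subset_Ici_self)
  apply exists_abs_le_on_Ioo_of_isBigO_one
  refine ((hlogA.const_mul_left (-1 / 2)).sub hcoupling).congr' ?_ EventuallyEq.rfl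
  filter_upwards [self_mem_nhdsWithin] with r hr
  have hr0 : r ≠ 0 := (hr₀.trans hr).ne'
  have hAr : A r ≠ 0 := (hApos r hr).ne'
  have hlogT : T' r / T r = -(A' r / (2 * A r)) - 2 * w' r ^ 2 / r := by
    have hq : 2 * r * A r * (T' r / T r) = -(r * A' r) - 4 * w' r ^ 2 * A r := by
      linear_combination heq2 r hr + heq1 r (mem_Ici_of_Ioi hr)
    field_simp
    linear_combination hq
  rw [hlogT]
  field_simp
  ring

/-- For a black hole solution of the SU(2) EYM equations with `A(r₀) = 0`,
`A > 0` on `(r₀,∞)`, the field equations `rA' + (1+2w'²)A = 1 − (1−w²)²/r²` and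
`2rA(T'/T) = (1−w²)²/r² + (1−2w'²)A − 1`, and `r₀ − (1−w(r₀)²)²/r₀ ≠ 0`, the logarithmic
derivative of `T` satisfies `T'/T = −1/(2(r−r₀)) + O(1)` as `r → r₀⁺`, i.e.
`T'/T + 1/(2(r−r₀))` is bounded on some interval `(r₀, r₀+δ)`. -/
theorem eym_T_log_derivative_horizon
    (r₀ : ℝ) (hr₀ : 0 < r₀) (w w' A A' T T' : ℝ → ℝ)
    (hw : ∀ r ∈ Ici r₀, HasDerivWithinAt w (w' r) (Ici r₀) r)
    (hw'c : ContinuousOn w' (Ici r₀))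
    (hA : ∀ r ∈ Ici r₀, HasDerivWithinAt A (A' r) (Ici r₀) r)
    (hA'C1 : ContDiffOn ℝ 1 A' (Ici r₀))
    (hA0 : A r₀ = 0) (hApos : ∀ r ∈ Ioi r₀, 0 < A r)
    (heq1 : ∀ r ∈ Ici r₀,
      r * A' r + (1 + 2 * w' r ^ 2) * A r = 1 - (1 - w r ^ 2) ^ 2 / r ^ 2)
    (hnz : r₀ - (1 - w r₀ ^ 2) ^ 2 / r₀ ≠ 0)
    (hTpos : ∀ r ∈ Ioi r₀, 0 < T r)
    (hT : ∀ r ∈ Ioi r₀, HasDerivAt T (T' r) r)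
    (hT'c : ContinuousOn T' (Ioi r₀))
    (heq2 : ∀ r ∈ Ioi r₀, 2 * r * A r * (T' r / T r)
      = (1 - w r ^ 2) ^ 2 / r ^ 2 + (1 - 2 * w' r ^ 2) * A r - 1) :
    ∃ δ > 0, ∃ C : ℝ, ∀ r ∈ Ioo r₀ (r₀ + δ),
      |T' r / T r + 1 / (2 * (r - r₀))| ≤ C :=
  eym_T_log_derivative_horizon_general r₀ hr₀ w w' A A' T T' hw'c hA hA'C1 hA0 hApos heq1 hnz heq2
end

section
/- Let r₀ ∈ ℝ, δ > 0, and let f : (r₀, r₀ + δ) → ℝ be positive and differentiable with f'(r)/f(r) = −1/(2(r − r₀)) + O(1) as r → r₀⁺ (that is, f'(r)/f(r) + 1/(2(r − r₀)) is bounded on (r₀, r₀ + δ)). Then there exists a constant c > 0 such that f(r) = c·(r − r₀)^{−1/2} + O((r − r₀)^{1/2}) as r → r₀⁺. -/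
open Set Filter Asymptotics Topology
open scoped NNReal

/-!
The function `g r = log f(r) + p log(r - r₀)` has derivative `f'/f + p/(r - r₀)`, which is bounded,
so `g` is Lipschitz on `(r₀, b)`. A Lipschitz function extends to the endpoint, giving a limit `L`
with `g(r) - L = O(r - r₀)`. Exponentiating, `f(r) (r - r₀)^p = e^L + O(r - r₀)`, and dividing by
`(r - r₀)^p` gives the claim with `c = e^L`; the theorem is the case `p = 1/2`.
-/

lemma LipschitzOnWith.exists_isBigO_sub {α : Type*} [PseudoMetricSpace α] {f : α → ℝ}
    {s : Set α} {K : ℝ≥0} (hf : LipschitzOnWith K f s) (a : α) :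
    ∃ L, (fun x => f x - L) =O[𝓝[s] a] (fun x => dist x a) := by
  obtain ⟨g, hg, hfg⟩ := hf.extend_real
  refine ⟨g a, IsBigO.of_bound K ?_⟩
  filter_upwards [self_mem_nhdsWithin] with x hx
  rw [hfg hx, ← dist_eq_norm, Real.norm_of_nonneg dist_nonneg]
  exact hg.dist_le_mul x a

lemma exists_isBigO_sub_of_abs_deriv_le {g g' : ℝ → ℝ} {a b C : ℝ} (hab : a < b)
    (hg : ∀ x ∈ Ioo a b, HasDerivAt g (g' x) x) (hC : ∀ x ∈ Ioo a b, |g' x| ≤ C) :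
    ∃ L, (fun x => g x - L) =O[𝓝[>] a] (fun x => x - a) := by
  have hlip : LipschitzOnWith C.toNNReal g (Ioo a b) :=
    (convex_Ioo a b).lipschitzOnWith_of_nnnorm_hasDerivWithin_le
      (fun x hx => (hg x hx).hasDerivWithinAt)
      (fun x hx => by
        rw [← NNReal.coe_le_coe, coe_nnnorm, Real.norm_eq_abs]
        exact (hC x hx).trans C.le_coe_toNNReal)
  obtain ⟨L, hL⟩ := hlip.exists_isBigO_sub a
  refine ⟨L, ?_⟩
  simpa only [dist_eq_norm, isBigO_norm_right, nhdsWithin_Ioo_eq_nhdsGT hab] using hL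

lemma HasDerivAt.log_add_mul_log_sub {f : ℝ → ℝ} {f' r r₀ : ℝ} (p : ℝ)
    (hf : HasDerivAt f f' r) (hpos : 0 < f r) (hr : r₀ < r) :
    HasDerivAt (fun x => Real.log (f x) + p * Real.log (x - r₀)) (f' / f r + p / (r - r₀)) r := by
  have h := ((hasDerivAt_id r).sub_const r₀).log (sub_pos.2 hr).ne'
  exact ((hf.log hpos.ne').add (h.const_mul p)).congr_deriv (by rw [id, mul_one_div])

theorem exists_mul_rpow_sub_isBigO_of_logDeriv {f f' : ℝ → ℝ} {r₀ b p C : ℝ} (hb : r₀ < b)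
    (hfpos : ∀ r ∈ Ioo r₀ b, 0 < f r) (hf : ∀ r ∈ Ioo r₀ b, HasDerivAt f (f' r) r)
    (hC : ∀ r ∈ Ioo r₀ b, |f' r / f r + p / (r - r₀)| ≤ C) :
    ∃ c > 0, (fun r => f r * (r - r₀) ^ p - c) =O[𝓝[>] r₀] (fun r => r - r₀) := by
  set g := fun r => Real.log (f r) + p * Real.log (r - r₀)
  obtain ⟨L, hL⟩ := exists_isBigO_sub_of_abs_deriv_le hb
    (fun r hr => (hf r hr).log_add_mul_log_sub p (hfpos r hr) hr.1) hC
  have hgL : Tendsto g (𝓝[>] r₀) (𝓝 L) := by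
    have := hL.trans_tendsto (tendsto_sub_nhds_zero_iff.2 nhdsWithin_le_nhds)
    simpa using this.add_const L
  have hexp := ((Real.hasDerivAt_exp L).isBigO_sub.comp_tendsto hgL).trans hL
  refine ⟨Real.exp L, Real.exp_pos L, hexp.congr' ?_ EventuallyEq.rfl⟩
  filter_upwards [Ioo_mem_nhdsGT hb] with r hr
  simp [g, Real.exp_add, Real.exp_log (hfpos r hr), Real.rpow_def_of_pos (sub_pos.2 hr.1), mul_comm]

theorem exists_sub_mul_rpow_isBigO_of_logDeriv {f f' : ℝ → ℝ} {r₀ b p C : ℝ} (hb : r₀ < b)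
    (hfpos : ∀ r ∈ Ioo r₀ b, 0 < f r) (hf : ∀ r ∈ Ioo r₀ b, HasDerivAt f (f' r) r)
    (hC : ∀ r ∈ Ioo r₀ b, |f' r / f r + p / (r - r₀)| ≤ C) :
    ∃ c > 0, (fun r => f r - c * (r - r₀) ^ (-p)) =O[𝓝[>] r₀] (fun r => (r - r₀) ^ (1 - p)) := by
  obtain ⟨c, hc, h⟩ := exists_mul_rpow_sub_isBigO_of_logDeriv hb hfpos hf hC
  refine ⟨c, hc, (h.mul (isBigO_refl (fun r => (r - r₀) ^ (-p)) _)).congr' ?_ ?_⟩ <;>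
    filter_upwards [self_mem_nhdsWithin] with r (hr : r₀ < r) <;>
    have hx := sub_pos.2 hr
  · rw [sub_mul, mul_assoc, ← Real.rpow_add hx, add_neg_cancel, Real.rpow_zero, mul_one]
  · rw [Real.rpow_sub hx, Real.rpow_one, Real.rpow_neg hx.le, div_eq_mul_inv]

/-- If `f > 0` is differentiable on `(r₀, r₀+δ)` with logarithmic
derivative `f'/f = −1/(2(r−r₀)) + O(1)` as `r → r₀⁺` (the difference bounded on the
interval), then there is `c > 0` with `f(r) = c(r−r₀)^{−1/2} + O((r−r₀)^{1/2})`
as `r → r₀⁺`. -/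
theorem log_derivative_integration
    (r₀ δ : ℝ) (hδ : 0 < δ) (f f' : ℝ → ℝ)
    (hfpos : ∀ r ∈ Ioo r₀ (r₀ + δ), 0 < f r)
    (hf : ∀ r ∈ Ioo r₀ (r₀ + δ), HasDerivAt f (f' r) r)
    (hbd : ∃ C : ℝ, ∀ r ∈ Ioo r₀ (r₀ + δ), |f' r / f r + 1 / (2 * (r - r₀))| ≤ C) :
    ∃ c > 0, (fun r => f r - c * (r - r₀) ^ (-(1:ℝ)/2)) =O[𝓝[>] r₀]
      (fun r => (r - r₀) ^ ((1:ℝ)/2)) := by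
  obtain ⟨C, hC⟩ := hbd
  have hC' : ∀ r ∈ Ioo r₀ (r₀ + δ), |f' r / f r + 1 / 2 / (r - r₀)| ≤ C := by
    simpa only [div_div] using hC
  obtain ⟨c, hc, h⟩ := exists_sub_mul_rpow_isBigO_of_logDeriv (by linarith) hfpos hf hC'
  refine ⟨c, hc, ?_⟩
  convert h using 4 <;> norm_num
end

section
/- Let r₀ > 0, let w : (r₀,∞) → ℝ be continuously differentiable with w bounded and r·w'(r) → 0 as r → ∞, let A : (r₀,∞) → ℝ be positive and continuously differentiable with A(r) = 1 + O(1/r) as r → ∞, and let T : (r₀,∞) → ℝ be positive and continuously differentiable, such that for all r > r₀: rA'(r) + (1 + 2w'(r)²)A(r) = 1 − (1 − w(r)²)²/r² and 2rA(r)·(T'(r)/T(r)) = (1 − w(r)²)²/r² + (1 − 2w'(r)²)A(r) − 1. Then with K := A^{−1/2}, one has T'(r)/T(r) + K'(r)/K(r) = O(1/r²) as r → ∞. -/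
open Set Filter MeasureTheory Asymptotics Topology

/-- Far-field decay for EYM black holes: with `w` bounded `C¹` and
`r·w'(r) → 0`, `A > 0` of class `C¹` with `A = 1 + O(1/r)`, `T > 0` of class `C¹`,
satisfying the EYM field equations, the coefficient `K := A^{−1/2}` satisfies
`T'/T + K'/K = O(1/r²)` as `r → ∞`. -/
theorem eym_farfield_decay
    (r₀ : ℝ) (hr₀ : 0 < r₀) (w w' A A' T T' : ℝ → ℝ)
    (hw : ∀ r ∈ Ioi r₀, HasDerivAt w (w' r) r)
    (hw'c : ContinuousOn w' (Ioi r₀))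
    (hwbd : ∃ M : ℝ, ∀ r ∈ Ioi r₀, |w r| ≤ M)
    (hw0 : Tendsto (fun r => r * w' r) atTop (𝓝 0))
    (hApos : ∀ r ∈ Ioi r₀, 0 < A r)
    (hA : ∀ r ∈ Ioi r₀, HasDerivAt A (A' r) r)
    (hA'c : ContinuousOn A' (Ioi r₀))
    (hAinf : (fun r => A r - 1) =O[atTop] (fun r => 1 / r))
    (hTpos : ∀ r ∈ Ioi r₀, 0 < T r)
    (hT : ∀ r ∈ Ioi r₀, HasDerivAt T (T' r) r)
    (hT'c : ContinuousOn T' (Ioi r₀))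
    (heq1 : ∀ r ∈ Ioi r₀,
      r * A' r + (1 + 2 * w' r ^ 2) * A r = 1 - (1 - w r ^ 2) ^ 2 / r ^ 2)
    (heq2 : ∀ r ∈ Ioi r₀, 2 * r * A r * (T' r / T r)
      = (1 - w r ^ 2) ^ 2 / r ^ 2 + (1 - 2 * w' r ^ 2) * A r - 1) :
    (fun r => T' r / T r
        + deriv (fun x => (A x) ^ (-(1:ℝ)/2)) r / (A r) ^ (-(1:ℝ)/2))
      =O[atTop] (fun r => 1 / r ^ 2) := by
  obtain ⟨M, hM⟩ := hwbd
  -- A tends to 1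
  have hinv : Tendsto (fun r : ℝ => 1 / r) atTop (𝓝 0) := by
    simpa [one_div] using tendsto_inv_atTop_zero
  have hAlim : Tendsto A atTop (𝓝 1) := by
    have := (hAinf.trans_tendsto hinv).add_const 1
    simpa using this
  have hAev : ∀ᶠ r in atTop, (1:ℝ)/2 < A r :=
    hAlim.eventually (eventually_gt_nhds (by norm_num))
  -- pointwise identity for r > r₀
  have key : ∀ r ∈ Ioi r₀, T' r / T r
        + deriv (fun x => (A x) ^ (-(1:ℝ)/2)) r / (A r) ^ (-(1:ℝ)/2)
      = ((1 - w r ^ 2) ^ 2 / r ^ 2 + (A r - 1)) * (1 / (r * A r)) := by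
    intro r hr
    have hrpos : 0 < r := hr₀.trans hr
    have hApr := hApos r hr
    have hTpr := hTpos r hr
    have hd : HasDerivAt (fun x => (A x) ^ (-(1:ℝ)/2))
        (A' r * (-(1:ℝ)/2) * A r ^ ((-(1:ℝ)/2) - 1)) r :=
      (hA r hr).rpow_const (Or.inl (ne_of_gt hApr))
    rw [hd.deriv]
    have hpow : A r ^ ((-(1:ℝ)/2) - 1) = A r ^ (-(1:ℝ)/2) / A r := by
      rw [Real.rpow_sub hApr, Real.rpow_one]
    have hpne : A r ^ (-(1:ℝ)/2) ≠ 0 := (Real.rpow_pos_of_pos hApr _).ne'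
    rw [hpow]
    have e1 := heq1 r hr
    have e2 := heq2 r hr
    have ht2 : (A' r * (-(1:ℝ)/2) * (A r ^ (-(1:ℝ)/2) / A r)) / A r ^ (-(1:ℝ)/2)
        = -(A' r) / (2 * A r) := by
      field_simp
    rw [ht2]
    have hA'e : A' r = (1 - (1 - w r ^ 2) ^ 2 / r ^ 2 - (1 + 2 * w' r ^ 2) * A r) / r := by
      rw [eq_div_iff hrpos.ne']
      linarith [e1]
    have hT'e : T' r / T r
        = ((1 - w r ^ 2) ^ 2 / r ^ 2 + (1 - 2 * w' r ^ 2) * A r - 1) / (2 * r * A r) := by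
      rw [eq_div_iff (by positivity)]
      linarith [e2]
    rw [hA'e, hT'e]
    field_simp
    ring
  -- big-O estimates
  have h1 : (fun r => (1 - w r ^ 2) ^ 2 / r ^ 2) =O[atTop] (fun r : ℝ => 1 / r ^ 2) := by
    apply IsBigO.of_bound ((1 + M ^ 2) ^ 2)
    filter_upwards [eventually_gt_atTop r₀] with r hr
    have hMb := hM r hr
    have hw2 : w r ^ 2 ≤ M ^ 2 := by nlinarith [abs_nonneg (w r), neg_abs_le (w r), le_abs_self (w r)]
    have h2 : |(1 - w r ^ 2) ^ 2| ≤ (1 + M ^ 2) ^ 2 := by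
      rw [abs_of_nonneg (sq_nonneg _)]
      nlinarith [sq_nonneg (w r)]
    calc |(1 - w r ^ 2) ^ 2 / r ^ 2| = |(1 - w r ^ 2) ^ 2| * |1 / r ^ 2| := by
          rw [← abs_mul]; ring_nf
      _ ≤ (1 + M ^ 2) ^ 2 * |1 / r ^ 2| := by
          exact mul_le_mul_of_nonneg_right h2 (abs_nonneg _)
  have hr2to1 : (fun r : ℝ => 1 / r ^ 2) =O[atTop] (fun r : ℝ => 1 / r) := by
    apply IsBigO.of_bound 1
    filter_upwards [eventually_ge_atTop (1:ℝ)] with r hr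
    have hrpos : (0:ℝ) < r := lt_of_lt_of_le one_pos hr
    simp only [Real.norm_eq_abs]
    rw [abs_of_nonneg (by positivity : (0:ℝ) ≤ 1 / r ^ 2),
      abs_of_nonneg (by positivity : (0:ℝ) ≤ 1 / r), one_mul]
    rw [div_le_div_iff₀ (by positivity) hrpos]
    nlinarith
  have hsum : (fun r => (1 - w r ^ 2) ^ 2 / r ^ 2 + (A r - 1)) =O[atTop] (fun r : ℝ => 1 / r) :=
    (h1.trans hr2to1).add hAinf
  have hinvO : (fun r : ℝ => 1 / (r * A r)) =O[atTop] (fun r : ℝ => 1 / r) := by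
    apply IsBigO.of_bound 2
    filter_upwards [eventually_ge_atTop (1:ℝ), hAev] with r hr hAr
    have hrpos : (0:ℝ) < r := lt_of_lt_of_le one_pos hr
    have hApr : (0:ℝ) < A r := lt_trans (by norm_num) hAr
    simp only [Real.norm_eq_abs]
    rw [abs_of_nonneg (by positivity : (0:ℝ) ≤ 1 / (r * A r)),
      abs_of_nonneg (by positivity : (0:ℝ) ≤ 1 / r)]
    have h2r : 2 * (1 / r) = 2 / r := by ring
    rw [h2r, div_le_div_iff₀ (by positivity) hrpos]
    nlinarith
  have hmul := hsum.mul hinvO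
  have hfin : (fun r : ℝ => 1 / r * (1 / r)) = (fun r : ℝ => 1 / r ^ 2) := by
    funext r; ring
  rw [hfin] at hmul
  refine hmul.congr' ?_ (by rfl)
  filter_upwards [eventually_gt_atTop r₀] with r hr
  exact (key r hr).symm
end

section
/- Let I ⊆ ℝ be an open interval, let p, q : I → ℝ be smooth with p(x) > 0 for all x ∈ I, let φ : I → ℂ be smooth with compact support in I, and let N ∈ ℕ. Then there exists a constant C > 0, depending only on φ, p, q, N, such that for every ω ∈ ℝ \ {0} and every smooth solution γ : I → ℂ of −γ''(x) + q(x)γ(x) = ω²p(x)γ(x), one has |∫_I φ(x)γ(x) dx| ≤ C·|ω|^{−2N}·sup_{x ∈ supp φ} |γ(x)|. -/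
/-!
Let `T ψ = -(ψ/p)'' + q (ψ/p)` be the formal transpose of `H = p⁻¹ (-d²/dx² + q)`. It preserves
smooth functions supported in `supp φ`, and Green's identity together with `H γ = ω² γ` gives
`∫ (T ψ) γ = ω² ∫ ψ γ`. Hence `ω^{2N} ∫ φ γ = ∫ (T^N φ) γ`, which is bounded by
`‖T^N φ‖₁ · sup_{supp φ} |γ|`, a constant independent of `ω` and `γ`.
-/

open Set Filter MeasureTheory Topology

section

-- Scoped: `ContDiff` notation reserves `ω`, which the final theorem uses as a variable.
open scoped ContDiff

theorem ContDiffOn.contDiff_of_tsupport_subset {𝕜 E F : Type*} [NontriviallyNormedField 𝕜]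
    [NormedAddCommGroup E] [NormedSpace 𝕜 E] [NormedAddCommGroup F] [NormedSpace 𝕜 F]
    {n : WithTop ℕ∞} {f : E → F} {s : Set E} (hf : ContDiffOn 𝕜 n f s) (hs : IsOpen s)
    (hsupp : tsupport f ⊆ s) : ContDiff 𝕜 n f := by
  refine contDiff_iff_contDiffAt.2 fun x => ?_
  by_cases hx : x ∈ s
  · exact hf.contDiffAt (hs.mem_nhds hx)
  · exact contDiffAt_const.congr_of_eventuallyEq
      (notMem_tsupport_iff_eventuallyEq.1 fun h => hx (hsupp h))

theorem Continuous.integrable_mul_of_tsupport_subset {X R : Type*} [TopologicalSpace X]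
    [MeasurableSpace X] [OpensMeasurableSpace X] {μ : Measure X} [IsFiniteMeasureOnCompacts μ]
    [NormedRing R] {f g : X → R} {s : Set X} (hf : Continuous f) (hfc : HasCompactSupport f)
    (hs : IsOpen s) (hfs : tsupport f ⊆ s) (hg : ContinuousOn g s) :
    Integrable (fun x => f x * g x) μ :=
  ((hf.continuousOn.mul hg).continuous_of_tsupport_subset hs
      ((tsupport_mul_subset_left (f := f) (g := g)).trans hfs)).integrable_of_hasCompactSupport
    hfc.mul_right

theorem norm_integral_mul_le_integral_norm_mul_iSup {X : Type*} [MeasurableSpace X]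
    [TopologicalSpace X] {μ : Measure X} {f γ : X → ℂ} {K : Set X} (hK : IsCompact K)
    (hf : Integrable f μ) (hfK : Function.support f ⊆ K) (hγ : ContinuousOn γ K) :
    ‖∫ x, f x * γ x ∂μ‖ ≤ (∫ x, ‖f x‖ ∂μ) * ⨆ x : K, ‖γ x‖ := by
  have hbdd : BddAbove (range fun x : K => ‖γ x‖) := by
    simpa only [image_eq_range] using (hK.image_of_continuousOn hγ.norm).bddAbove
  have hle : ∀ x, ‖f x * γ x‖ ≤ ‖f x‖ * ⨆ x : K, ‖γ x‖ := fun x => by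
    by_cases hx : x ∈ K
    · rw [norm_mul]
      exact mul_le_mul_of_nonneg_left (le_ciSup hbdd ⟨x, hx⟩) (norm_nonneg _)
    · simp [Function.notMem_support.1 fun h => hx (hfK h)]
  calc ‖∫ x, f x * γ x ∂μ‖ ≤ ∫ x, ‖f x‖ * ⨆ x : K, ‖γ x‖ ∂μ :=
        norm_integral_le_of_norm_le (hf.norm.mul_const _) (Eventually.of_forall hle)
    _ = (∫ x, ‖f x‖ ∂μ) * ⨆ x : K, ‖γ x‖ := integral_mul_const _ _

/-- Green's identity: `u v' - u' v` has derivative `u v'' - u'' v` and compact support in `I`. -/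
theorem setIntegral_mul_deriv_deriv_sub_eq_zero {I : Set ℝ} (hI : IsOpen I) {u v : ℝ → ℂ}
    (hu : ContDiff ℝ 2 u) (hu_supp : HasCompactSupport u) (huI : tsupport u ⊆ I)
    (hv : ContDiffOn ℝ 2 v I) :
    ∫ x in I, (u x * deriv (deriv v) x - deriv (deriv u) x * v x) = 0 := by
  have hu' : ContDiff ℝ 1 (deriv u) := hu.deriv'
  have hv' : ContDiffOn ℝ 1 (deriv v) I := hv.deriv_of_isOpen hI (by norm_num)
  set w : ℝ → ℂ := fun x => u x * deriv v x - deriv u x * v x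
  have hw_supp : tsupport w ⊆ tsupport u := closure_minimal (fun x hx => by
    by_contra hxu
    have hu0 : u x = 0 := image_eq_zero_of_notMem_tsupport hxu
    have hu'0 : deriv u x = 0 :=
      image_eq_zero_of_notMem_tsupport fun h => hxu (tsupport_deriv_subset h)
    exact hx (by simp [w, hu0, hu'0])) (isClosed_tsupport u)
  have hw : ContDiff ℝ 1 w :=
    ((hu.contDiffOn.of_le (by norm_num)).mul hv' |>.sub
      (hu'.contDiffOn.mul (hv.of_le (by norm_num)))).contDiff_of_tsupport_subset hI
      (hw_supp.trans huI)
  have hw_compact : HasCompactSupport w := hu_supp.mono' ((subset_tsupport w).trans hw_supp)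
  have hw_deriv : ∀ x ∈ I, deriv w x = u x * deriv (deriv v) x - deriv (deriv u) x * v x := by
    intro x hx
    have hu1 := (hu.differentiable two_ne_zero x).hasDerivAt
    have hu2 := (hu'.differentiable one_ne_zero x).hasDerivAt
    have hv1 := ((hv.differentiableOn two_ne_zero x hx).differentiableAt
      (hI.mem_nhds hx)).hasDerivAt
    have hv2 := ((hv'.differentiableOn one_ne_zero x hx).differentiableAt
      (hI.mem_nhds hx)).hasDerivAt
    refine ((hu1.mul hv2).sub (hu2.mul hv1)).deriv.trans ?_
    ring
  calc ∫ x in I, (u x * deriv (deriv v) x - deriv (deriv u) x * v x)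
      = ∫ x in I, deriv w x :=
        setIntegral_congr_fun hI.measurableSet fun x hx => (hw_deriv x hx).symm
    _ = ∫ x, deriv w x := setIntegral_eq_integral_of_forall_compl_eq_zero fun x hx =>
        image_eq_zero_of_notMem_tsupport fun h => hx (huI (hw_supp (tsupport_deriv_subset h)))
    _ = 0 := integral_eq_zero_of_hasDerivAt_of_integrable
        (fun x => (hw.differentiable one_ne_zero x).hasDerivAt)
        ((hw.continuous_deriv le_rfl).integrable_of_hasCompactSupport hw_compact.deriv)
        (hw.continuous.integrable_of_hasCompactSupport hw_compact)

/-- The formal transpose, with respect to `dx`, of `γ ↦ p⁻¹ (-γ'' + q γ)`. -/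
noncomputable def slTranspose (p q : ℝ → ℝ) (ψ : ℝ → ℂ) : ℝ → ℂ :=
  fun x => -deriv (deriv fun y => (p y)⁻¹ • ψ y) x + q x • ((p x)⁻¹ • ψ x)

section slTranspose

variable {I : Set ℝ} {p q : ℝ → ℝ} {ψ : ℝ → ℂ}

theorem tsupport_slTranspose_subset (p q : ℝ → ℝ) (ψ : ℝ → ℂ) :
    tsupport (slTranspose p q ψ) ⊆ tsupport ψ := by
  refine closure_minimal (fun x hx => ?_) (isClosed_tsupport ψ)
  by_contra hxψ
  have hψ0 : ψ x = 0 := image_eq_zero_of_notMem_tsupport hxψ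
  have hu'' : deriv (deriv fun y => (p y)⁻¹ • ψ y) x = 0 :=
    image_eq_zero_of_notMem_tsupport fun h =>
      hxψ (tsupport_smul_subset_right _ _ (tsupport_deriv_subset (tsupport_deriv_subset h)))
  exact hx (by simp only [slTranspose, hψ0, hu'', smul_zero, neg_zero, add_zero])

theorem tsupport_iterate_slTranspose_subset (p q : ℝ → ℝ) (ψ : ℝ → ℂ) (n : ℕ) :
    tsupport ((slTranspose p q)^[n] ψ) ⊆ tsupport ψ := by
  induction n with
  | zero => exact subset_rfl
  | succ n ih =>
    rw [Function.iterate_succ_apply']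
    exact (tsupport_slTranspose_subset p q _).trans ih

theorem contDiff_slTranspose (hI : IsOpen I) (hp : ContDiffOn ℝ ∞ p I) (hq : ContDiffOn ℝ ∞ q I)
    (hp0 : ∀ x ∈ I, p x ≠ 0) (hψ : ContDiff ℝ ∞ ψ) (hψI : tsupport ψ ⊆ I) :
    ContDiff ℝ ∞ (slTranspose p q ψ) := by
  have huI : tsupport (fun y => (p y)⁻¹ • ψ y) ⊆ I :=
    (tsupport_smul_subset_right _ _).trans hψI
  have hu : ContDiff ℝ ∞ (fun y => (p y)⁻¹ • ψ y) :=
    ((hp.inv hp0).smul hψ.contDiffOn).contDiff_of_tsupport_subset hI huI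
  have hqu_supp : tsupport (fun y => q y • ((p y)⁻¹ • ψ y)) ⊆ I :=
    (tsupport_smul_subset_right _ _).trans huI
  have hqu : ContDiff ℝ ∞ (fun y => q y • ((p y)⁻¹ • ψ y)) :=
    (hq.smul hu.contDiffOn).contDiff_of_tsupport_subset hI hqu_supp
  exact (hu.iterate_deriv 2).neg.add hqu

theorem contDiff_iterate_slTranspose (hI : IsOpen I) (hp : ContDiffOn ℝ ∞ p I)
    (hq : ContDiffOn ℝ ∞ q I) (hp0 : ∀ x ∈ I, p x ≠ 0) (hψ : ContDiff ℝ ∞ ψ)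
    (hψI : tsupport ψ ⊆ I) (n : ℕ) : ContDiff ℝ ∞ ((slTranspose p q)^[n] ψ) := by
  induction n with
  | zero => exact hψ
  | succ n ih =>
    rw [Function.iterate_succ_apply']
    exact contDiff_slTranspose hI hp hq hp0 ih
      ((tsupport_iterate_slTranspose_subset p q ψ n).trans hψI)

variable {γ : ℝ → ℂ} {c : ℂ}

theorem setIntegral_slTranspose_mul (hI : IsOpen I) (hp : ContDiffOn ℝ ∞ p I)
    (hq : ContDiffOn ℝ ∞ q I) (hp0 : ∀ x ∈ I, p x ≠ 0) (hψ : ContDiff ℝ ∞ ψ)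
    (hψc : HasCompactSupport ψ) (hψI : tsupport ψ ⊆ I) (hγ : ContDiffOn ℝ 2 γ I)
    (hγeq : ∀ x ∈ I, -deriv (deriv γ) x + q x * γ x = c * p x * γ x) :
    ∫ x in I, slTranspose p q ψ x * γ x = c * ∫ x in I, ψ x * γ x := by
  set u : ℝ → ℂ := fun y => (p y)⁻¹ • ψ y
  have hu_supp : tsupport u ⊆ tsupport ψ := tsupport_smul_subset_right _ _
  have hu : ContDiff ℝ ∞ u :=
    ((hp.inv hp0).smul hψ.contDiffOn).contDiff_of_tsupport_subset hI (hu_supp.trans hψI)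
  have hTψ_supp : tsupport (slTranspose p q ψ) ⊆ tsupport ψ := tsupport_slTranspose_subset p q ψ
  have hTψ_int : Integrable (fun x => slTranspose p q ψ x * γ x) (volume.restrict I) :=
    (contDiff_slTranspose hI hp hq hp0 hψ hψI).continuous.integrable_mul_of_tsupport_subset
      (hψc.mono' ((subset_tsupport _).trans hTψ_supp)) hI (hTψ_supp.trans hψI) hγ.continuousOn
  have hψ_int : Integrable (fun x => ψ x * γ x) (volume.restrict I) :=
    hψ.continuous.integrable_mul_of_tsupport_subset hψc hI hψI hγ.continuousOn
  have hpointwise : ∀ x ∈ I, slTranspose p q ψ x * γ x - c * (ψ x * γ x) =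
      u x * deriv (deriv γ) x - deriv (deriv u) x * γ x := by
    intro x hx
    have hψx : ψ x = p x * u x := by
      rw [show u x = (p x)⁻¹ • ψ x from rfl, Complex.real_smul, Complex.ofReal_inv,
        mul_inv_cancel_left₀ (Complex.ofReal_ne_zero.2 (hp0 x hx))]
    have hTψx : slTranspose p q ψ x = -deriv (deriv u) x + q x • u x := rfl
    rw [hTψx, Complex.real_smul, hψx]
    linear_combination u x * hγeq x hx
  have hgreen := setIntegral_mul_deriv_deriv_sub_eq_zero hI (hu.of_le ENat.LEInfty.out)
    (hψc.mono' ((subset_tsupport _).trans hu_supp)) (hu_supp.trans hψI) hγ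
  rw [← sub_eq_zero, ← integral_const_mul, ← integral_sub hTψ_int (hψ_int.const_mul c),
    setIntegral_congr_fun hI.measurableSet hpointwise, hgreen]

theorem setIntegral_iterate_slTranspose_mul (hI : IsOpen I) (hp : ContDiffOn ℝ ∞ p I)
    (hq : ContDiffOn ℝ ∞ q I) (hp0 : ∀ x ∈ I, p x ≠ 0) (hψ : ContDiff ℝ ∞ ψ)
    (hψc : HasCompactSupport ψ) (hψI : tsupport ψ ⊆ I) (hγ : ContDiffOn ℝ 2 γ I)
    (hγeq : ∀ x ∈ I, -deriv (deriv γ) x + q x * γ x = c * p x * γ x) (n : ℕ) :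
    ∫ x in I, (slTranspose p q)^[n] ψ x * γ x = c ^ n * ∫ x in I, ψ x * γ x := by
  induction n with
  | zero => simp
  | succ n ih =>
    have hsupp := tsupport_iterate_slTranspose_subset p q ψ n
    rw [Function.iterate_succ_apply', setIntegral_slTranspose_mul hI hp hq hp0
      (contDiff_iterate_slTranspose hI hp hq hp0 hψ hψI n)
      (hψc.mono' ((subset_tsupport _).trans hsupp)) (hsupp.trans hψI) hγ hγeq, ih]
    ring

end slTranspose

end

theorem eigenfunction_pairing_decay_general
    (I : Set ℝ) (hIo : IsOpen I)
    (p q : ℝ → ℝ) (hp : ContDiffOn ℝ (⊤ : ℕ∞) p I) (hq : ContDiffOn ℝ (⊤ : ℕ∞) q I)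
    (hppos : ∀ x ∈ I, 0 < p x)
    (φ : ℝ → ℂ) (hφ : ContDiff ℝ (⊤ : ℕ∞) φ) (hφsupp : HasCompactSupport φ)
    (hφI : tsupport φ ⊆ I) (N : ℕ) :
    ∃ C > 0, ∀ ω : ℝ, ω ≠ 0 → ∀ γ : ℝ → ℂ, ContDiffOn ℝ (⊤ : ℕ∞) γ I →
      (∀ x ∈ I, -deriv (deriv γ) x + (q x : ℂ) * γ x = (ω : ℂ) ^ 2 * (p x : ℂ) * γ x) →
      ‖∫ x in I, φ x * γ x‖ ≤ C * (|ω| ^ (2 * N))⁻¹ * ⨆ x : tsupport φ, ‖γ x‖ := by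
  have hp0 : ∀ x ∈ I, p x ≠ 0 := fun x hx => (hppos x hx).ne'
  set ψ := (slTranspose p q)^[N] φ
  have hψ : ContDiff ℝ (⊤ : ℕ∞) ψ := contDiff_iterate_slTranspose hIo hp hq hp0 hφ hφI N
  have hψ_supp : Function.support ψ ⊆ tsupport φ :=
    (subset_tsupport ψ).trans (tsupport_iterate_slTranspose_subset p q φ N)
  refine ⟨(∫ x in I, ‖ψ x‖) + 1, by positivity, fun ω hω γ hγ hγeq => ?_⟩
  set S := ⨆ x : tsupport φ, ‖γ x‖
  have hpair : ∫ x in I, ψ x * γ x = ((ω : ℂ) ^ 2) ^ N * ∫ x in I, φ x * γ x :=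
    setIntegral_iterate_slTranspose_mul hIo hp hq hp0 hφ hφsupp hφI
      (hγ.of_le ENat.LEInfty.out) hγeq N
  have hbound : ‖∫ x in I, ψ x * γ x‖ ≤ (∫ x in I, ‖ψ x‖) * S :=
    norm_integral_mul_le_integral_norm_mul_iSup hφsupp
      (hψ.continuous.integrable_of_hasCompactSupport (hφsupp.mono' hψ_supp)) hψ_supp
      (hγ.continuousOn.mono hφI)
  rw [hpair, norm_mul, norm_pow, norm_pow, Complex.norm_real, Real.norm_eq_abs, ← pow_mul]
    at hbound
  have hS : 0 ≤ S := Real.iSup_nonneg fun _ => norm_nonneg _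
  calc ‖∫ x in I, φ x * γ x‖ = (|ω| ^ (2 * N))⁻¹ * (|ω| ^ (2 * N) * ‖∫ x in I, φ x * γ x‖) := by
        field_simp
    _ ≤ (|ω| ^ (2 * N))⁻¹ * ((∫ x in I, ‖ψ x‖) * S) := by gcongr
    _ ≤ (|ω| ^ (2 * N))⁻¹ * (((∫ x in I, ‖ψ x‖) + 1) * S) := by gcongr; linarith
    _ = ((∫ x in I, ‖ψ x‖) + 1) * (|ω| ^ (2 * N))⁻¹ * S := by ring

/-- Integration by parts against a smooth compactly supported test
function `φ` gives arbitrary polynomial decay in `ω` of the pairing with any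
generalized eigenfunction `γ` of `−γ'' + qγ = ω²pγ` on an open interval `I`
(`p > 0`, `p`, `q` smooth): `|∫_I φγ| ≤ C|ω|^{−2N} sup_{supp φ} |γ|` with `C`
independent of `ω` and `γ`. -/
theorem eigenfunction_pairing_decay
    (I : Set ℝ) (hIo : IsOpen I) (hIc : I.OrdConnected)
    (p q : ℝ → ℝ) (hp : ContDiffOn ℝ (⊤ : ℕ∞) p I) (hq : ContDiffOn ℝ (⊤ : ℕ∞) q I)
    (hppos : ∀ x ∈ I, 0 < p x)
    (φ : ℝ → ℂ) (hφ : ContDiff ℝ (⊤ : ℕ∞) φ) (hφsupp : HasCompactSupport φ)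
    (hφI : tsupport φ ⊆ I) (N : ℕ) :
    ∃ C > 0, ∀ ω : ℝ, ω ≠ 0 → ∀ γ : ℝ → ℂ, ContDiffOn ℝ (⊤ : ℕ∞) γ I →
      (∀ x ∈ I, -deriv (deriv γ) x + (q x : ℂ) * γ x = (ω : ℂ) ^ 2 * (p x : ℂ) * γ x) →
      ‖∫ x in I, φ x * γ x‖ ≤ C * (|ω| ^ (2 * N))⁻¹ * ⨆ x : tsupport φ, ‖γ x‖ :=
  eigenfunction_pairing_decay_general I hIo p q hp hq hppos φ hφ hφsupp hφI N
end
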